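/- arXiv:2212.07258 — 9 statements merged into one kernel-verified Lean document; each statement's English description precedes it below -/
import Mathlib

section
/- Let d ≥ 1, let S ⊆ ℤ^d be a finite set of steps with real weights (p_s)_{s∈S}, and define the discrete Laplacian of a function g : ℤ^d → ℝ by Δg(x) = Σ_{s∈S} p_s g(x−s) − g(x). Let K ≥ 1, let f_1,…,f_K : ℕ → ℝ be nowhere-zero functions such that lim_{n→∞} f_{k+1}(n)/f_k(n) = 0 for every 1 ≤ k ≤ K−1 and lim_{n→∞} f_k(n+1)/f_k(n) = 1 for every 1 ≤ k ≤ K, and let v_1,…,v_K : ℤ^d → ℝ. Suppose the quantity q(x;n) := Σ_{k=1}^K f_k(n) v_k(x) satisfies the recursion q(x;n+1) = Σ_{s∈S} p_s q(x−s;n) for all x ∈ ℤ^d and all n ∈ ℕ. Then for every 1 ≤ k ≤ K the function v_k is polyharmonic of degree k, i.e. Δ^k v_k = 0 on all of ℤ^d. -/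
open Filter

/-- The discrete Laplacian on `ℤ^d` associated to a weighted step set `(S, p)`:
`Δg(x) = Σ_{s ∈ S} p_s g(x - s) - g(x)`. -/
def discreteLap {d : ℕ} (S : Finset (Fin d → ℤ)) (p : (Fin d → ℤ) → ℝ)
    (g : (Fin d → ℤ) → ℝ) : (Fin d → ℤ) → ℝ :=
  fun x => (∑ s ∈ S, p s * g (x - s)) - g x


lemma discreteLap_zero {d : ℕ} (S : Finset (Fin d → ℤ)) (p : (Fin d → ℤ) → ℝ) :
    discreteLap S p 0 = 0 := by
  funext x; simp [discreteLap]

lemma discreteLap_sum {d K : ℕ} (S : Finset (Fin d → ℤ)) (p : (Fin d → ℤ) → ℝ)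
    (c : Fin K → ℝ) (g : Fin K → (Fin d → ℤ) → ℝ) :
    discreteLap S p (fun x => ∑ j : Fin K, c j * g j x) =
      fun x => ∑ j : Fin K, c j * discreteLap S p (g j) x := by
  funext x
  simp only [discreteLap, Finset.mul_sum, mul_sub, Finset.sum_sub_distrib]
  congr 1
  rw [Finset.sum_comm]
  exact Finset.sum_congr rfl fun j _ => Finset.sum_congr rfl fun s _ => by ring

lemma discreteLap_iter_sum {d K : ℕ} (S : Finset (Fin d → ℤ)) (p : (Fin d → ℤ) → ℝ)
    (m : ℕ) (c : Fin K → ℝ) (g : Fin K → (Fin d → ℤ) → ℝ) :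
    (discreteLap S p)^[m] (fun x => ∑ j : Fin K, c j * g j x) =
      fun x => ∑ j : Fin K, c j * (discreteLap S p)^[m] (g j) x := by
  induction m with
  | zero => simp
  | succ m ih =>
    rw [Function.iterate_succ_apply', ih, discreteLap_sum]
    funext x
    exact Finset.sum_congr rfl fun j _ => by rw [Function.iterate_succ_apply']

lemma ratio_tendsto_zero {K : ℕ} (f : Fin K → ℕ → ℝ)
    (hf_ne : ∀ k : Fin K, ∀ n : ℕ, f k n ≠ 0)
    (hf_ratio : ∀ k : Fin K, ∀ hk : (k : ℕ) + 1 < K,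
      Tendsto (fun n => f ⟨(k : ℕ) + 1, hk⟩ n / f k n) atTop (nhds 0)) :
    ∀ i j : Fin K, (i : ℕ) < (j : ℕ) →
      Tendsto (fun n => f j n / f i n) atTop (nhds 0) := by
  suffices H : ∀ t : ℕ, ∀ i j : Fin K, (j : ℕ) = (i : ℕ) + t + 1 →
      Tendsto (fun n => f j n / f i n) atTop (nhds 0) by
    intro i j hij
    exact H ((j : ℕ) - (i : ℕ) - 1) i j (by omega)
  intro t
  induction t with
  | zero =>
    intro i j hij
    have hk : (i : ℕ) + 1 < K := by have := j.isLt; omega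
    have hj : j = ⟨(i : ℕ) + 1, hk⟩ := Fin.ext (by simpa using hij)
    rw [hj]; exact hf_ratio i hk
  | succ t ih =>
    intro i j hij
    have hk : (i : ℕ) + 1 < K := by have := j.isLt; omega
    set i' : Fin K := ⟨(i : ℕ) + 1, hk⟩ with hi'
    have h1 : Tendsto (fun n => f j n / f i' n) atTop (nhds 0) := ih i' j (by simp [hi']; omega)
    have h2 : Tendsto (fun n => f i' n / f i n) atTop (nhds 0) := hf_ratio i hk
    have := h1.mul h2
    rw [mul_zero] at this
    refine this.congr fun n => ?_
    rw [div_mul_div_comm, mul_comm (f i' n), mul_div_mul_right _ _ (hf_ne i' n)]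

/-- If a combinatorial quantity `q(x; n) = Σ_{k=1}^K f_k(n) v_k(x)` satisfies the step-set
recursion `q(x; n+1) = Σ_{s ∈ S} p_s q(x - s; n)`, where the `f_k` are nowhere zero with
`f_{k+1}(n)/f_k(n) → 0` and `f_k(n+1)/f_k(n) → 1`, then each `v_k` is discrete
polyharmonic of degree `k` (here `k = (k' : Fin K) + 1`), i.e. `Δ^k v_k = 0` on `ℤ^d`. -/
theorem polyharmonicity_of_asymptotic_expansion
    (d : ℕ) (hd : 1 ≤ d) (S : Finset (Fin d → ℤ)) (p : (Fin d → ℤ) → ℝ)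
    (K : ℕ) (hK : 1 ≤ K)
    (f : Fin K → ℕ → ℝ) (v : Fin K → (Fin d → ℤ) → ℝ)
    (hf_ne : ∀ k : Fin K, ∀ n : ℕ, f k n ≠ 0)
    (hf_ratio : ∀ k : Fin K, ∀ hk : (k : ℕ) + 1 < K,
      Tendsto (fun n => f ⟨(k : ℕ) + 1, hk⟩ n / f k n) atTop (nhds 0))
    (hf_shift : ∀ k : Fin K, Tendsto (fun n => f k (n + 1) / f k n) atTop (nhds 1))
    (hrec : ∀ (x : Fin d → ℤ) (n : ℕ),
      (∑ k : Fin K, f k (n + 1) * v k x) =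
        ∑ s ∈ S, p s * (∑ k : Fin K, f k n * v k (x - s))) :
    ∀ k : Fin K, (discreteLap S p)^[(k : ℕ) + 1] (v k) = 0 := by
  have hratio0 := ratio_tendsto_zero f hf_ne hf_ratio
  -- basic identity E0
  have E0 : ∀ (n : ℕ) (x : Fin d → ℤ),
      (∑ j : Fin K, (f j (n + 1) - f j n) * v j x) =
        ∑ j : Fin K, f j n * discreteLap S p (v j) x := by
    intro n x
    have h := hrec x n
    simp only [Finset.mul_sum] at h
    rw [Finset.sum_comm] at h
    simp only [discreteLap, sub_mul, mul_sub, Finset.sum_sub_distrib, Finset.mul_sum]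
    rw [h]
    congr 1
    exact Finset.sum_congr rfl fun j _ => Finset.sum_congr rfl fun s _ => by ring
  -- identity after applying Δ^[m]
  have star : ∀ (m n : ℕ) (x : Fin d → ℤ),
      (∑ j : Fin K, (f j (n + 1) - f j n) * (discreteLap S p)^[m] (v j) x) =
        ∑ j : Fin K, f j n * (discreteLap S p)^[m + 1] (v j) x := by
    intro m n x
    have h : ((discreteLap S p)^[m] fun y => ∑ j : Fin K, (f j (n + 1) - f j n) * v j y)
        = (discreteLap S p)^[m] fun y => ∑ j : Fin K, f j n * discreteLap S p (v j) y := by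
      congr 1; funext y; exact E0 n y
    rw [discreteLap_iter_sum, discreteLap_iter_sum] at h
    have h2 := congrFun h x
    simpa only [Function.iterate_succ_apply] using h2
  suffices H : ∀ m : ℕ, ∀ k : Fin K, (k : ℕ) = m → (discreteLap S p)^[m + 1] (v k) = 0 by
    intro k; exact H (k : ℕ) k rfl
  intro m
  induction m using Nat.strong_induction_on with
  | _ m ih =>
  intro k hkm
  subst hkm
  have hvanish : ∀ j : Fin K, (j : ℕ) < (k : ℕ) → ∀ t, (j : ℕ) + 1 ≤ t →
      (discreteLap S p)^[t] (v j) = 0 := by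
    intro j hj t ht
    have h0 : (discreteLap S p)^[(j : ℕ) + 1] (v j) = 0 := ih (j : ℕ) hj j rfl
    have hteq : t = (t - ((j : ℕ) + 1)) + ((j : ℕ) + 1) := by omega
    rw [hteq, Function.iterate_add_apply, h0]
    exact Function.iterate_fixed (discreteLap_zero S p) _
  funext x
  set m := (k : ℕ) with hm
  set A : Fin K → ℝ := fun j => (discreteLap S p)^[m + 1] (v j) x with hA
  set B : Fin K → ℝ := fun j => (discreteLap S p)^[m] (v j) x with hB
  set g : ℕ → ℝ := fun n => ∑ j : Fin K,
      (f j n * A j - (f j (n + 1) - f j n) * B j) / f k n with hg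
  have hg0 : ∀ n, g n = 0 := by
    intro n
    show (∑ j : Fin K, (f j n * A j - (f j (n + 1) - f j n) * B j) / f k n) = 0
    rw [← Finset.sum_div, Finset.sum_sub_distrib, ← star m n x, sub_self, zero_div]
  have htend : ∀ j : Fin K,
      Tendsto (fun n => (f j n * A j - (f j (n + 1) - f j n) * B j) / f k n) atTop
        (nhds (if j = k then A k else 0)) := by
    intro j
    have hre : ∀ n, (f j n * A j - (f j (n + 1) - f j n) * B j) / f k n
        = (f j n / f k n) * A j - ((f j (n + 1) - f j n) / f k n) * B j := by
      intro n; ring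
    rcases lt_trichotomy (j : ℕ) (k : ℕ) with hlt | heq | hgt
    · -- early terms vanish identically
      have hAj : A j = 0 := by
        rw [hA]; simp only
        rw [hvanish j hlt (m + 1) (by omega)]; rfl
      have hBj : B j = 0 := by
        rw [hB]; simp only
        rw [hvanish j hlt m (by omega)]; rfl
      rw [if_neg (by intro h; rw [h] at hlt; exact lt_irrefl _ hlt)]
      refine (tendsto_const_nhds (x := (0:ℝ))).congr fun n => by
        rw [hre n, hAj, hBj]; ring
    · -- the diagonal term
      have hjk : j = k := Fin.ext heq
      subst hjk
      rw [if_pos rfl]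
      have h1 : Tendsto (fun n => (f j n / f j n) * A j
          - (f j (n + 1) / f j n - 1) * B j) atTop (nhds (A j)) := by
        have := ((tendsto_const_nhds (x := (1:ℝ))).mul
            (tendsto_const_nhds (x := A j))).sub
          (((hf_shift j).sub (tendsto_const_nhds (x := (1:ℝ)))).mul
            (tendsto_const_nhds (x := B j)))
        simp only [one_mul, sub_self, zero_mul, sub_zero] at this
        refine this.congr fun n => ?_
        rw [div_self (hf_ne j n), one_mul]
      refine h1.congr fun n => ?_
      rw [hre n, sub_div, div_self (hf_ne j n)]
    · -- later terms tend to zero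
      rw [if_neg (by intro h; rw [h] at hgt; exact lt_irrefl _ hgt)]
      have h1 : Tendsto (fun n => f j n / f k n) atTop (nhds 0) := hratio0 k j hgt
      have h2 : Tendsto (fun n => f j (n + 1) / f k n) atTop (nhds 0) := by
        have := (hf_shift j).mul h1
        rw [one_mul] at this
        refine this.congr fun n => ?_
        rw [div_mul_div_comm, mul_comm (f j n), mul_div_mul_right _ _ (hf_ne j n)]
      have := (h1.mul (tendsto_const_nhds (x := A j))).sub
        ((h2.sub h1).mul (tendsto_const_nhds (x := B j)))
      simp only [zero_mul, sub_zero, sub_self] at this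
      refine this.congr fun n => ?_
      rw [hre n, sub_div]
  have hglim : Tendsto g atTop (nhds (A k)) := by
    have := tendsto_finset_sum Finset.univ (fun j _ => htend j)
    simpa [Finset.sum_ite_eq' Finset.univ k] using this
  have hzero : Tendsto g atTop (nhds 0) := by
    rw [show g = fun _ => (0 : ℝ) from funext hg0]
    exact tendsto_const_nhds
  have hAk : A k = 0 := tendsto_nhds_unique hglim hzero
  simpa [hA] using hAk
end

section
/- For every non-degenerate model with small steps and zero drift and every n ≥ 1, the real vector space ℋ_n of discrete polyharmonic functions of degree n in the quarter plane is isomorphic, as a real vector space, to the n-fold product (ℋ_1)^n of the space of discrete harmonic functions. -/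
open Finset

def SmallStepGrid : Finset (ℤ × ℤ) := ({-1, 0, 1} : Finset ℤ) ×ˢ ({-1, 0, 1} : Finset ℤ)

structure SmallStepModel where
  p : ℤ → ℤ → ℝ
  nonneg : ∀ u v, 0 ≤ p u v
  supp : ∀ u v, p u v ≠ 0 → ((u, v) ∈ SmallStepGrid ∧ (u, v) ≠ (0, 0))
  sum_one : ∑ uv ∈ SmallStepGrid, p uv.1 uv.2 = 1

def SmallStepModel.ZeroDrift (M : SmallStepModel) : Prop :=
  (∑ uv ∈ SmallStepGrid, (uv.1 : ℝ) * M.p uv.1 uv.2 = 0) ∧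
  (∑ uv ∈ SmallStepGrid, (uv.2 : ℝ) * M.p uv.1 uv.2 = 0)

def SmallStepModel.cyc (M : SmallStepModel) : Fin 8 → ℝ :=
  ![M.p 1 1, M.p 1 0, M.p 1 (-1), M.p 0 (-1), M.p (-1) (-1), M.p (-1) 0, M.p (-1) 1,
    M.p 0 1]

def SmallStepModel.NonDegenerate (M : SmallStepModel) : Prop :=
  ∀ k : Fin 8, ¬(M.cyc k = 0 ∧ M.cyc (k + 1) = 0 ∧ M.cyc (k + 2) = 0)

/-- The discrete Laplacian `Δ̃`: on the interior `V° = {(i,j) : i ≥ 1, j ≥ 1}` of the quarter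
plane (points of `ℤ²` outside `V°` playing the role of `∂V` and carrying the value `0`),
`Δ̃f(i,j) = Σ_{(u,v)} p_{u,v} f(i+u, j+v) − f(i,j)`, and `Δ̃f = 0` off `V°`. -/
def lapFun (M : SmallStepModel) (f : ℤ × ℤ → ℝ) : ℤ × ℤ → ℝ :=
  fun z =>
    if 1 ≤ z.1 ∧ 1 ≤ z.2 then
      (∑ uv ∈ SmallStepGrid, M.p uv.1 uv.2 * f (z.1 + uv.1, z.2 + uv.2)) - f z
    else 0

/-- `Δ̃` as a linear endomorphism of the space of functions on `ℤ²`. -/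
noncomputable def lapT (M : SmallStepModel) : (ℤ × ℤ → ℝ) →ₗ[ℝ] (ℤ × ℤ → ℝ) where
  toFun := lapFun M
  map_add' f g := by
    funext z
    simp only [lapFun, Pi.add_apply]
    split
    · simp only [mul_add, Finset.sum_add_distrib]; ring
    · simp
  map_smul' c f := by
    funext z
    simp only [lapFun, Pi.smul_apply, smul_eq_mul, RingHom.id_apply]
    split
    · rw [mul_sub, Finset.mul_sum]
      congr 1
      exact Finset.sum_congr rfl fun uv _ => by ring
    · simp

/-- The subspace of functions vanishing outside the interior of the quarter plane,
i.e. vanishing on `∂V` (and outside `V`). -/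
def boundaryZero : Submodule ℝ (ℤ × ℤ → ℝ) where
  carrier := {f | ∀ z : ℤ × ℤ, ¬(1 ≤ z.1 ∧ 1 ≤ z.2) → f z = 0}
  add_mem' := fun {f g} hf hg z hz => by simp [hf z hz, hg z hz]
  zero_mem' := fun z _ => rfl
  smul_mem' := fun c f hf z hz => by simp [hf z hz]

/-- `ℋ_n`: the real vector space of discrete polyharmonic functions of degree `n` in the
quarter plane (functions vanishing on the boundary with `Δ̃ⁿ f = 0`). -/
noncomputable def polySpace (M : SmallStepModel) (n : ℕ) : Submodule ℝ (ℤ × ℤ → ℝ) :=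
  boundaryZero ⊓ LinearMap.ker ((lapT M) ^ n)

/-!
`Δ̃` maps the space of functions vanishing on `∂V` onto itself. Write `Δ̃f(z) = ∑ₜ c_t f(z + t)`
on `V°` and let `s` be the step of largest weight `3u + 2v` with `c_s ≠ 0`; non-degeneracy puts
`s` in `{(1,1), (1,0), (0,1)}`. Then `Δ̃f = g` is solved by recursion on the weight of the point:
the equation at `z` determines `f(z + s)` from the values of `f` at lighter points.

Hence `Δ̃` restricts to a surjection `ℋ_{n+1} → ℋ_n` with kernel `ℋ_1`. Short exact sequences of
vector spaces split, so `ℋ_{n+1} ≃ ℋ_1 × ℋ_n`, and induction on `n` concludes.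
-/

theorem Function.Exact.nonempty_linearEquiv_prod {R M N P : Type*} [Ring R]
    [AddCommGroup M] [AddCommGroup N] [AddCommGroup P] [Module R M] [Module R N] [Module R P]
    [Module.Projective R P] {f : M →ₗ[R] N} {g : N →ₗ[R] P} (h : Function.Exact f g)
    (hf : Function.Injective f) (hg : Function.Surjective g) : Nonempty (N ≃ₗ[R] M × P) :=
  let ⟨l, hl⟩ := g.exists_rightInverse_of_surjective (LinearMap.range_eq_top.2 hg)
  ⟨(h.splitSurjectiveEquiv hf ⟨l, hl⟩).1⟩

namespace Submodule

variable {K V : Type*} [DivisionRing K] [AddCommGroup V] [Module K V] {T : Module.End K V}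
  {S : Submodule K V}

theorem nonempty_inf_ker_pow_succ_equiv_prod (hS : S.map T = S) (n : ℕ) :
    Nonempty (↥(S ⊓ LinearMap.ker (T ^ (n + 1))) ≃ₗ[K]
      ↥(S ⊓ LinearMap.ker T) × ↥(S ⊓ LinearMap.ker (T ^ n))) := by
  have hker : S ⊓ LinearMap.ker T ≤ S ⊓ LinearMap.ker (T ^ (n + 1)) :=
    inf_le_inf_left S (LinearMap.ker_le_ker_comp T (T ^ n) |>.trans_eq (by rw [pow_succ]; rfl))
  have hmaps : ∀ x ∈ S ⊓ LinearMap.ker (T ^ (n + 1)), T x ∈ S ⊓ LinearMap.ker (T ^ n) :=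
    fun x hx => mem_inf.2 ⟨hS ▸ mem_map_of_mem (mem_inf.1 hx).1, by
      rw [LinearMap.mem_ker, ← Module.End.mul_apply, ← pow_succ]; exact (mem_inf.1 hx).2⟩
  refine Function.Exact.nonempty_linearEquiv_prod (f := inclusion hker) (g := T.restrict hmaps)
    ?_ (inclusion_injective hker) ?_
  · rintro ⟨x, hx⟩
    simp [Subtype.ext_iff, (mem_inf.1 hx).1]
  · rintro ⟨y, hyS, hy⟩
    obtain ⟨x, hxS, rfl⟩ : y ∈ S.map T := hS.symm ▸ hyS
    refine ⟨⟨x, hxS, ?_⟩, rfl⟩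
    rw [SetLike.mem_coe, LinearMap.mem_ker, pow_succ, Module.End.mul_apply]
    exact hy

theorem nonempty_inf_ker_pow_equiv_pi (hS : S.map T = S) (n : ℕ) :
    Nonempty (↥(S ⊓ LinearMap.ker (T ^ n)) ≃ₗ[K] (Fin n → ↥(S ⊓ LinearMap.ker T))) := by
  induction n with
  | zero =>
    have : Subsingleton ↥(S ⊓ LinearMap.ker (T ^ 0)) := by
      rw [pow_zero, Module.End.one_eq_id, LinearMap.ker_id, inf_bot_eq]
      infer_instance
    exact ⟨LinearEquiv.ofSubsingleton _ _⟩
  | succ n ih =>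
    obtain ⟨e⟩ := nonempty_inf_ker_pow_succ_equiv_prod hS n
    obtain ⟨e'⟩ := ih
    exact ⟨e ≪≫ₗ (LinearEquiv.refl K _).prodCongr e' ≪≫ₗ Fin.consLinearEquiv K fun _ => _⟩

end Submodule

-- Ranks the small steps `(1,1) > (1,0) > (0,1) > (1,-1) > (0,0) > ⋯`.
def stepWeight (t : ℤ × ℤ) : ℤ := 3 * t.1 + 2 * t.2

theorem stepWeight_injOn : Set.InjOn stepWeight SmallStepGrid := by
  intro t ht t' ht'
  rw [mem_coe] at ht ht'
  revert t t'
  decide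

theorem nonneg_of_two_le_stepWeight {t : ℤ × ℤ} (ht : t ∈ SmallStepGrid)
    (hw : 2 ≤ stepWeight t) : 0 ≤ t.1 ∧ 0 ≤ t.2 := by
  revert t
  decide

theorem neg_one_le_of_mem_smallStepGrid {t : ℤ × ℤ} (ht : t ∈ SmallStepGrid) :
    -1 ≤ t.1 ∧ -1 ≤ t.2 := by
  revert t
  decide

namespace SmallStepModel

variable (M : SmallStepModel)

def lapCoeff (t : ℤ × ℤ) : ℝ := M.p t.1 t.2 - if t = 0 then 1 else 0

theorem lapFun_eq_sum_lapCoeff (f : ℤ × ℤ → ℝ) {z : ℤ × ℤ} (hz : 1 ≤ z.1 ∧ 1 ≤ z.2) :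
    lapFun M f z = ∑ t ∈ SmallStepGrid, M.lapCoeff t * f (z + t) := by
  have h0 : (0 : ℤ × ℤ) ∈ SmallStepGrid := by decide
  simp only [lapFun, if_pos hz, lapCoeff, sub_mul, sum_sub_distrib, ite_mul, one_mul, zero_mul,
    sum_ite_eq', if_pos h0, add_zero]
  rfl

structure IsLeadingStep (s : ℤ × ℤ) : Prop where
  mem : s ∈ SmallStepGrid
  fst_nonneg : 0 ≤ s.1
  snd_nonneg : 0 ≤ s.2
  lapCoeff_ne_zero : M.lapCoeff s ≠ 0
  lapCoeff_eq_zero : ∀ t ∈ SmallStepGrid, t ≠ s → stepWeight s ≤ stepWeight t → M.lapCoeff t = 0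

theorem p_zero_zero : M.p 0 0 = 0 := by
  by_contra h
  exact (M.supp 0 0 h).2 rfl

theorem exists_isLeadingStep (hnd : M.NonDegenerate) : ∃ s, M.IsLeadingStep s := by
  have hne : (SmallStepGrid.filter (M.lapCoeff · ≠ 0)).Nonempty :=
    ⟨0, mem_filter.2 ⟨by decide, by simp [lapCoeff, p_zero_zero]⟩⟩
  obtain ⟨s, hs, hmax⟩ := exists_max_image _ stepWeight hne
  rw [mem_filter] at hs
  have hcorner : ∃ u ∈ SmallStepGrid, 2 ≤ stepWeight u ∧ M.lapCoeff u ≠ 0 := by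
    by_contra! hall
    have hc : ∀ u ∈ SmallStepGrid, 2 ≤ stepWeight u → u ≠ 0 → M.p u.1 u.2 = 0 :=
      fun u hu hw h0 => by simpa [lapCoeff, h0] using hall u hu hw
    -- `hnd 7` says that `p 0 1`, `p 1 1`, `p 1 0` do not all vanish
    exact hnd 7 ⟨hc (0, 1) (by decide) (by decide) (by decide),
      hc (1, 1) (by decide) (by decide) (by decide), hc (1, 0) (by decide) (by decide) (by decide)⟩
  obtain ⟨u, huG, hu2, hu⟩ := hcorner
  have hws : 2 ≤ stepWeight s := hu2.trans (hmax u (mem_filter.2 ⟨huG, hu⟩))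
  obtain ⟨hs1, hs2⟩ := nonneg_of_two_le_stepWeight hs.1 hws
  refine ⟨s, hs.1, hs1, hs2, hs.2, fun t ht hts hst => ?_⟩
  by_contra hct
  exact hts (stepWeight_injOn ht hs.1 (le_antisymm (hmax t (mem_filter.2 ⟨ht, hct⟩)) hst))

noncomputable def lapSolve (s : ℤ × ℤ) (g : ℤ × ℤ → ℝ) : ℤ × ℤ → ℝ := fun z =>
  if 1 ≤ z.1 - s.1 ∧ 1 ≤ z.2 - s.2 then
    (g (z - s) - ∑ t ∈ (SmallStepGrid.filter (stepWeight · < stepWeight s)).attach,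
        M.lapCoeff t * lapSolve s g (z - s + t)) / M.lapCoeff s
  else 0
termination_by z => (stepWeight z).toNat
decreasing_by
  obtain ⟨ht, hw⟩ := mem_filter.1 t.2
  have := neg_one_le_of_mem_smallStepGrid ht
  simp only [stepWeight, Prod.fst_add, Prod.snd_add, Prod.fst_sub, Prod.snd_sub] at hw ⊢
  omega

variable {M}

theorem lapSolve_mem_boundaryZero {s : ℤ × ℤ} (hs : M.IsLeadingStep s) (g : ℤ × ℤ → ℝ) :
    M.lapSolve s g ∈ boundaryZero := by
  intro z hz
  have := hs.fst_nonneg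
  have := hs.snd_nonneg
  rw [lapSolve, if_neg (by omega)]

theorem lapCoeff_mul_lapSolve_add {s : ℤ × ℤ} (hs : M.IsLeadingStep s) (g : ℤ × ℤ → ℝ)
    {z : ℤ × ℤ} (hz : 1 ≤ z.1 ∧ 1 ≤ z.2) :
    M.lapCoeff s * M.lapSolve s g (z + s) = g z - ∑ t ∈ SmallStepGrid.filter
      (stepWeight · < stepWeight s), M.lapCoeff t * M.lapSolve s g (z + t) := by
  rw [lapSolve, if_pos (by simpa using hz), add_sub_cancel_right,
    sum_attach _ fun t => M.lapCoeff t * M.lapSolve s g (z + t),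
    mul_div_cancel₀ _ hs.lapCoeff_ne_zero]

theorem lapT_lapSolve {s : ℤ × ℤ} (hs : M.IsLeadingStep s) {g : ℤ × ℤ → ℝ}
    (hg : g ∈ boundaryZero) : lapT M (M.lapSolve s g) = g := by
  funext z
  by_cases hz : 1 ≤ z.1 ∧ 1 ≤ z.2
  · have hlead : ∑ t ∈ SmallStepGrid.filter (¬stepWeight · < stepWeight s),
        M.lapCoeff t * M.lapSolve s g (z + t) = M.lapCoeff s * M.lapSolve s g (z + s) := by
      refine sum_eq_single_of_mem s (mem_filter.2 ⟨hs.mem, lt_irrefl _⟩) fun t ht hts => ?_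
      rw [mem_filter, not_lt] at ht
      rw [hs.lapCoeff_eq_zero t ht.1 hts ht.2, zero_mul]
    calc lapT M (M.lapSolve s g) z
        = ∑ t ∈ SmallStepGrid, M.lapCoeff t * M.lapSolve s g (z + t) :=
          M.lapFun_eq_sum_lapCoeff _ hz
      _ = g z := by
          rw [← sum_filter_add_sum_filter_not _ (stepWeight · < stepWeight s), hlead,
            lapCoeff_mul_lapSolve_add hs g hz]
          ring
  · exact (if_neg hz).trans (hg z hz).symm

end SmallStepModel

theorem lapT_mem_boundaryZero (M : SmallStepModel) (f : ℤ × ℤ → ℝ) :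
    lapT M f ∈ boundaryZero :=
  fun _ hz => if_neg hz

theorem map_lapT_boundaryZero {M : SmallStepModel} (hnd : M.NonDegenerate) :
    boundaryZero.map (lapT M) = boundaryZero := by
  refine le_antisymm (Submodule.map_le_iff_le_comap.2 fun f _ => lapT_mem_boundaryZero M f)
    fun g hg => ?_
  obtain ⟨s, hs⟩ := M.exists_isLeadingStep hnd
  exact ⟨M.lapSolve s g, SmallStepModel.lapSolve_mem_boundaryZero hs g,
    SmallStepModel.lapT_lapSolve hs hg⟩

theorem polySpace_linearEquiv_pi_harmonic_general (M : SmallStepModel)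
    (hnd : M.NonDegenerate) (n : ℕ) :
    Nonempty ((polySpace M n) ≃ₗ[ℝ] (Fin n → polySpace M 1)) := by
  rw [polySpace, polySpace, pow_one]
  exact Submodule.nonempty_inf_ker_pow_equiv_pi (map_lapT_boundaryZero hnd) n

/-- For every non-degenerate model with small steps and zero drift and every `n ≥ 1`, the
space `ℋ_n` of discrete polyharmonic functions of degree `n` in the quarter plane is
isomorphic, as a real vector space, to `(ℋ_1)^n`. -/
theorem polySpace_linearEquiv_pi_harmonic (M : SmallStepModel)
    (hnd : M.NonDegenerate) (hzd : M.ZeroDrift) (n : ℕ) (hn : 1 ≤ n) :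
    Nonempty ((polySpace M n) ≃ₗ[ℝ] (Fin n → polySpace M 1)) :=
  polySpace_linearEquiv_pi_harmonic_general M hnd n
end

section
/- For every non-degenerate model with small steps and zero drift, the real vector space ℋ_1 of discrete harmonic functions in the quarter plane is isomorphic, as a real vector space, to the space ℝ[[x]] of formal power series in one variable over ℝ. -/
open Finset

/-!
Choose a step `s₀` of the model in `{(1,1), (1,0), (0,1)}` (non-degeneracy provides one) and
weights `a, b ≥ 1` such that `s₀` is the unique maximiser of `a u + b v` over the support. The
harmonicity equation at `z - s₀` expresses `p_{s₀} f(z)` through values of `f` at points of strictly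
smaller weight. Hence a harmonic function is determined by its values on the "free" interior
points `z`, those with `z - s₀ ∉ V°`, and these values can be prescribed arbitrarily. The free
points form a countably infinite set (they contain a full line `{1} × ℕ_{>0}` or `ℕ_{>0} × {1}`),
so `ℋ₁ ≅ ℝ^ℕ ≅ ℝ[[x]]`.
-/

lemma lapFun_eq_add_sum_erase (M : SmallStepModel) (f : ℤ × ℤ → ℝ) {z s₀ : ℤ × ℤ}
    (hz : 1 ≤ z.1 ∧ 1 ≤ z.2) (hs₀ : s₀ ∈ SmallStepGrid) :
    lapFun M f z = M.p s₀.1 s₀.2 * f (z + s₀) +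
      ∑ s ∈ SmallStepGrid.erase s₀, M.p s.1 s.2 * f (z + s) - f z := by
  rw [add_sum_erase _ (fun s => M.p s.1 s.2 * f (z + s)) hs₀]
  exact if_pos hz

lemma mem_polySpace_one_iff {M : SmallStepModel} {f : ℤ × ℤ → ℝ} :
    f ∈ polySpace M 1 ↔ (∀ z : ℤ × ℤ, ¬(1 ≤ z.1 ∧ 1 ≤ z.2) → f z = 0) ∧ ∀ z, lapFun M f z = 0 := by
  simp only [polySpace, Submodule.mem_inf, LinearMap.mem_ker, pow_one, funext_iff]
  rfl

structure DominantStep (M : SmallStepModel) where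
  step : ℤ × ℤ
  a : ℤ
  b : ℤ
  one_le_a : 1 ≤ a
  one_le_b : 1 ≤ b
  step_fst_nonneg : 0 ≤ step.1
  step_snd_nonneg : 0 ≤ step.2
  step_ne_zero : step ≠ 0
  p_step_ne_zero : M.p step.1 step.2 ≠ 0
  weight_lt : ∀ s : ℤ × ℤ, M.p s.1 s.2 ≠ 0 → s ≠ step →
    a * s.1 + b * s.2 < a * step.1 + b * step.2

lemma SmallStepModel.coord_mem_of_p_ne_zero (M : SmallStepModel) {s : ℤ × ℤ}
    (h : M.p s.1 s.2 ≠ 0) : (s.1 = -1 ∨ s.1 = 0 ∨ s.1 = 1) ∧ (s.2 = -1 ∨ s.2 = 0 ∨ s.2 = 1) := by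
  simpa [SmallStepGrid] using (M.supp _ _ h).1

theorem SmallStepModel.NonDegenerate.nonempty_dominantStep {M : SmallStepModel}
    (hnd : M.NonDegenerate) : Nonempty (DominantStep M) := by
  -- `p_{0,1}, p_{1,1}, p_{1,0}` sit at the cyclically consecutive positions `7, 0, 1`
  have hne : ¬(M.p 0 1 = 0 ∧ M.p 1 1 = 0 ∧ M.p 1 0 = 0) := hnd 7
  refine if h11 : M.p 1 1 = 0 then
      if h10 : M.p 1 0 = 0 then
        ⟨⟨(0, 1), 1, 2, le_rfl, one_le_two, le_rfl, zero_le_one, by simp,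
          fun h01 => hne ⟨h01, h11, h10⟩, ?_⟩⟩
      else ⟨⟨(1, 0), 2, 1, one_le_two, le_rfl, zero_le_one, le_rfl, by simp, h10, ?_⟩⟩
    else ⟨⟨(1, 1), 1, 1, le_rfl, le_rfl, zero_le_one, zero_le_one, by simp, h11, ?_⟩⟩
  all_goals
    rintro ⟨u, v⟩ hp hs
    obtain ⟨hu, hv⟩ := M.coord_mem_of_p_ne_zero hp
    rcases hu with rfl | rfl | rfl <;> rcases hv with rfl | rfl | rfl <;> simp_all

namespace DominantStep

variable {M : SmallStepModel} (D : DominantStep M)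

def weight (z : ℤ × ℤ) : ℤ := D.a * z.1 + D.b * z.2

lemma weight_pos {z : ℤ × ℤ} (hz : 1 ≤ z.1 ∧ 1 ≤ z.2) : 0 < D.weight z := by
  unfold weight
  nlinarith [D.one_le_a, D.one_le_b]

lemma toNat_weight_lt {y z : ℤ × ℤ} (hz : 1 ≤ z.1 ∧ 1 ≤ z.2) (h : D.weight y < D.weight z) :
    (D.weight y).toNat < (D.weight z).toNat := by
  have := D.weight_pos hz
  omega

lemma one_le_step_fst_or_snd : 1 ≤ D.step.1 ∨ 1 ≤ D.step.2 := by
  have h := D.step_ne_zero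
  simp only [Ne, Prod.ext_iff, Prod.fst_zero, Prod.snd_zero] at h
  have := D.step_fst_nonneg
  have := D.step_snd_nonneg
  omega

lemma weight_sub_step_lt (z : ℤ × ℤ) : D.weight (z - D.step) < D.weight z := by
  simp only [weight, Prod.fst_sub, Prod.snd_sub]
  rcases D.one_le_step_fst_or_snd with h | h <;>
    nlinarith [D.one_le_a, D.one_le_b, D.step_fst_nonneg, D.step_snd_nonneg]

lemma weight_sub_step_add_lt (z : ℤ × ℤ) {s : ℤ × ℤ} (hs : M.p s.1 s.2 ≠ 0) (hne : s ≠ D.step) :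
    D.weight (z - D.step + s) < D.weight z := by
  have := D.weight_lt s hs hne
  simp only [weight, Prod.fst_add, Prod.snd_add, Prod.fst_sub, Prod.snd_sub]
  linarith

lemma step_mem_grid : D.step ∈ SmallStepGrid := (M.supp _ _ D.p_step_ne_zero).1

def IsFree (z : ℤ × ℤ) : Prop :=
  (1 ≤ z.1 ∧ 1 ≤ z.2) ∧ ¬(1 ≤ (z - D.step).1 ∧ 1 ≤ (z - D.step).2)

noncomputable def extend (g : {z // D.IsFree z} → ℝ) (z : ℤ × ℤ) : ℝ :=
  if hz : 1 ≤ z.1 ∧ 1 ≤ z.2 then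
    if hw : 1 ≤ (z - D.step).1 ∧ 1 ≤ (z - D.step).2 then
      (M.p D.step.1 D.step.2)⁻¹ * (extend g (z - D.step) -
        -- steps outside the support are dropped: only those are guaranteed to lower the weight
        ∑ s ∈ (SmallStepGrid.erase D.step).attach,
          if hs : M.p s.1.1 s.1.2 = 0 then 0 else M.p s.1.1 s.1.2 * extend g (z - D.step + s))
    else g ⟨z, hz, hw⟩
  else 0
termination_by (D.weight z).toNat
decreasing_by
  · exact D.toNat_weight_lt hz (D.weight_sub_step_lt z)
  · exact D.toNat_weight_lt hz (D.weight_sub_step_add_lt z hs (Finset.ne_of_mem_erase s.2))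

variable (g : {z // D.IsFree z} → ℝ)

lemma extend_of_not_interior {z : ℤ × ℤ} (hz : ¬(1 ≤ z.1 ∧ 1 ≤ z.2)) : D.extend g z = 0 := by
  rw [extend, dif_neg hz]

lemma extend_of_isFree {z : ℤ × ℤ} (hz : D.IsFree z) : D.extend g z = g ⟨z, hz⟩ := by
  rw [extend, dif_pos hz.1, dif_neg hz.2]

lemma p_step_mul_extend {z : ℤ × ℤ} (hz : 1 ≤ z.1 ∧ 1 ≤ z.2)
    (hw : 1 ≤ (z - D.step).1 ∧ 1 ≤ (z - D.step).2) :
    M.p D.step.1 D.step.2 * D.extend g z = D.extend g (z - D.step) -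
      ∑ s ∈ SmallStepGrid.erase D.step, M.p s.1 s.2 * D.extend g (z - D.step + s) := by
  rw [extend, dif_pos hz, dif_pos hw, mul_inv_cancel_left₀ D.p_step_ne_zero,
    ← sum_attach (SmallStepGrid.erase D.step)]
  refine congrArg _ (sum_congr rfl fun s _ => ?_)
  split_ifs with hs
  · rw [hs, zero_mul]
  · rfl

lemma lapFun_extend (z : ℤ × ℤ) : lapFun M (D.extend g) z = 0 := by
  by_cases hz : 1 ≤ z.1 ∧ 1 ≤ z.2
  · have hz' : 1 ≤ (z + D.step).1 ∧ 1 ≤ (z + D.step).2 := by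
      simp only [Prod.fst_add, Prod.snd_add]
      have := D.step_fst_nonneg
      have := D.step_snd_nonneg
      omega
    have hrec := D.p_step_mul_extend g hz' (by rwa [add_sub_cancel_right])
    rw [add_sub_cancel_right] at hrec
    rw [lapFun_eq_add_sum_erase M _ hz D.step_mem_grid]
    linarith
  · exact if_neg hz

lemma extend_mem_polySpace : D.extend g ∈ polySpace M 1 :=
  mem_polySpace_one_iff.2 ⟨fun _ => D.extend_of_not_interior g, D.lapFun_extend g⟩

lemma eq_zero_of_isFree {f : ℤ × ℤ → ℝ} (hf : f ∈ polySpace M 1)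
    (hfree : ∀ z, D.IsFree z → f z = 0) : f = 0 := by
  obtain ⟨hbdry, hharm⟩ := mem_polySpace_one_iff.1 hf
  suffices ∀ z, f z = 0 from funext this
  intro z
  induction z using (measure fun z => (D.weight z).toNat).wf.induction with
  | _ z ih =>
  by_cases hz : 1 ≤ z.1 ∧ 1 ≤ z.2
  · by_cases hw : 1 ≤ (z - D.step).1 ∧ 1 ≤ (z - D.step).2
    · have h := hharm (z - D.step)
      rw [lapFun_eq_add_sum_erase M f hw D.step_mem_grid, sub_add_cancel,
        ih _ (D.toNat_weight_lt hz (D.weight_sub_step_lt z)),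
        sum_eq_zero fun s hs => ?_] at h
      · simpa [D.p_step_ne_zero] using h
      by_cases hps : M.p s.1 s.2 = 0
      · rw [hps, zero_mul]
      · rw [ih _ (D.toNat_weight_lt hz (D.weight_sub_step_add_lt z hps (ne_of_mem_erase hs))),
          mul_zero]
    · exact hfree z ⟨hz, hw⟩
  · exact hbdry z hz

noncomputable def restrict : polySpace M 1 →ₗ[ℝ] ({z // D.IsFree z} → ℝ) :=
  LinearMap.funLeft ℝ ℝ Subtype.val ∘ₗ (polySpace M 1).subtype

lemma bijective_restrict : Function.Bijective D.restrict := by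
  refine ⟨(injective_iff_map_eq_zero _).2 fun f hf => ?_, fun g => ?_⟩
  · exact Subtype.ext (D.eq_zero_of_isFree f.2 fun z hz => congrFun hf ⟨z, hz⟩)
  · exact ⟨⟨D.extend g, D.extend_mem_polySpace g⟩, funext fun z => D.extend_of_isFree g z.2⟩

noncomputable def harmonicEquiv : polySpace M 1 ≃ₗ[ℝ] ({z // D.IsFree z} → ℝ) :=
  LinearEquiv.ofBijective D.restrict D.bijective_restrict

lemma infinite_isFree : Infinite {z // D.IsFree z} := by
  rcases D.one_le_step_fst_or_snd with h | h
  · refine Infinite.of_injective (fun n : ℕ => ⟨(1, n + 1), ?_⟩) fun m n hmn => ?_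
    · simp only [IsFree, Prod.fst_sub, Prod.snd_sub]
      omega
    · simpa using congrArg (fun z => z.1.2) hmn
  · refine Infinite.of_injective (fun n : ℕ => ⟨(n + 1, 1), ?_⟩) fun m n hmn => ?_
    · simp only [IsFree, Prod.fst_sub, Prod.snd_sub]
      omega
    · simpa using congrArg (fun z => z.1.1) hmn

end DominantStep

theorem harmonicSpace_linearEquiv_powerSeries_general (M : SmallStepModel)
    (hnd : M.NonDegenerate) :
    Nonempty ((polySpace M 1) ≃ₗ[ℝ] PowerSeries ℝ) := by
  obtain ⟨D⟩ := hnd.nonempty_dominantStep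
  have := D.infinite_isFree
  obtain ⟨_⟩ := nonempty_denumerable {z // D.IsFree z}
  -- `PowerSeries ℝ` is by definition `(Unit →₀ ℕ) → ℝ`
  exact ⟨D.harmonicEquiv.trans <| LinearEquiv.funCongrLeft ℝ ℝ <|
    (Finsupp.uniqueEquiv ()).trans (Denumerable.eqv _).symm⟩

/-- For every non-degenerate model with small steps and zero drift, the space `ℋ_1` of
discrete harmonic functions in the quarter plane is isomorphic, as a real vector space,
to the space `ℝ[[x]]` of formal power series in one variable over `ℝ`. -/
theorem harmonicSpace_linearEquiv_powerSeries (M : SmallStepModel)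
    (hnd : M.NonDegenerate) (hzd : M.ZeroDrift) :
    Nonempty ((polySpace M 1) ≃ₗ[ℝ] PowerSeries ℝ) :=
  harmonicSpace_linearEquiv_powerSeries_general M hnd
end

section
/- Let (p_{i,j}) be a model with small steps. If h : V → ℂ vanishes on ∂V, is discrete harmonic (Δh(i,j) = 0 for all (i,j) ∈ V°), and moreover h(i,1) = 0 for all i ≥ 1 and h(1,j) = 0 for all j ≥ 1, then h is identically zero. Equivalently, a discrete harmonic function vanishing on the boundary of the quarter plane is uniquely determined by its values on the first row {(i,1) : i ≥ 1} and the first column {(1,j) : j ≥ 1}. -/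
open Finset

/-- Expansion of a sum over the small-step grid into its nine terms. -/
lemma grid_sum_expand (F : ℤ × ℤ → ℂ) :
    ∑ uv ∈ SmallStepGrid, F uv =
    F (-1,-1) + F (-1,0) + F (-1,1) + F (0,-1) + F (0,0) + F (0,1) +
      F (1,-1) + F (1,0) + F (1,1) := by
  simp [SmallStepGrid, Finset.sum_product]
  ring

/-- A function on `ℤ` vanishing at all `i ≤ 1` and satisfying a nontrivial
3-term recurrence for `i ≥ 1` vanishes identically. -/
lemma three_term_zero (f : ℤ → ℂ) (A B C : ℂ) (hABC : ¬(B = 0 ∧ C = 0 ∧ A = 0))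
    (h0 : ∀ i : ℤ, i ≤ 1 → f i = 0)
    (hrec : ∀ i : ℤ, 1 ≤ i → A * f (i - 1) + B * f i + C * f (i + 1) = 0) :
    ∀ i : ℤ, f i = 0 := by
  by_cases hC : C = 0
  · by_cases hB : B = 0
    · have hA : A ≠ 0 := fun hA => hABC ⟨hB, hC, hA⟩
      intro i
      rcases le_or_gt i 1 with hi | hi
      · exact h0 i hi
      · have := hrec (i + 1) (by omega)
        simp only [add_sub_cancel_right, hB, hC, zero_mul, add_zero, mul_zero] at this
        exact (mul_eq_zero.mp this).resolve_left hA
    · have key : ∀ m : ℕ, f m = 0 := by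
        intro m
        induction m using Nat.strong_induction_on with
        | _ m ih =>
          match m with
          | 0 => exact h0 0 (by norm_num)
          | 1 => exact h0 1 le_rfl
          | (k + 2) =>
            have hr := hrec ((k : ℤ) + 2) (by omega)
            have e1 : ((k : ℤ) + 2) - 1 = ((k + 1 : ℕ) : ℤ) := by push_cast; ring
            rw [e1, ih (k + 1) (by omega), hC] at hr
            simp only [mul_zero, zero_mul, zero_add, add_zero] at hr
            have h2 : f ((k : ℤ) + 2) = 0 := (mul_eq_zero.mp hr).resolve_left hB
            rw [show ((k + 2 : ℕ) : ℤ) = (k : ℤ) + 2 by push_cast; ring]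
            exact h2
      intro i
      rcases le_or_gt i 0 with hi | hi
      · exact h0 i (by omega)
      · obtain ⟨m, rfl⟩ : ∃ m : ℕ, i = (m : ℤ) := ⟨i.toNat, (Int.toNat_of_nonneg hi.le).symm⟩
        exact key m
  · have key : ∀ m : ℕ, f m = 0 := by
      intro m
      induction m using Nat.strong_induction_on with
      | _ m ih =>
        match m with
        | 0 => exact h0 0 (by norm_num)
        | 1 => exact h0 1 le_rfl
        | (k + 2) =>
          have hr := hrec ((k : ℤ) + 1) (by omega)
          have e1 : ((k : ℤ) + 1) - 1 = ((k : ℕ) : ℤ) := by ring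
          have e2 : ((k : ℤ) + 1) = ((k + 1 : ℕ) : ℤ) := by push_cast; ring
          rw [e1, ih k (by omega)] at hr
          rw [show (k : ℤ) + 1 + 1 = ((k + 2 : ℕ) : ℤ) by push_cast; ring] at hr
          rw [e2, ih (k + 1) (by omega)] at hr
          simp only [mul_zero, zero_add] at hr
          exact (mul_eq_zero.mp hr).resolve_left hC
    intro i
    rcases le_or_gt i 0 with hi | hi
    · exact h0 i (by omega)
    · obtain ⟨m, rfl⟩ : ∃ m : ℕ, i = (m : ℤ) := ⟨i.toNat, (Int.toNat_of_nonneg hi.le).symm⟩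
      exact key m

/-- A discrete harmonic function on the quarter plane vanishing on the boundary `∂V`
(encoded as a function on `ℤ²` vanishing outside the interior `V° = {i ≥ 1, j ≥ 1}`)
which moreover vanishes on the first row `{(i,1) : i ≥ 1}` and the first column
`{(1,j) : j ≥ 1}` is identically zero. -/
theorem harmonic_eq_zero_of_vanishing_first_row_and_column (M : SmallStepModel)
    (h : ℤ × ℤ → ℂ)
    (hbd : ∀ i j : ℤ, ¬(1 ≤ i ∧ 1 ≤ j) → h (i, j) = 0)
    (hharm : ∀ i j : ℤ, 1 ≤ i → 1 ≤ j →
      (∑ uv ∈ SmallStepGrid, (M.p uv.1 uv.2 : ℂ) * h (i + uv.1, j + uv.2)) - h (i, j) = 0)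
    (hrow : ∀ i : ℤ, 1 ≤ i → h (i, 1) = 0)
    (hcol : ∀ j : ℤ, 1 ≤ j → h (1, j) = 0) :
    ∀ z : ℤ × ℤ, h z = 0 := by
  have hp00 : M.p 0 0 = 0 := by
    by_contra hne; exact (M.supp 0 0 hne).2 rfl
  have rows : ∀ n : ℕ, ∀ j : ℤ, j ≤ (n : ℤ) → ∀ i : ℤ, h (i, j) = 0 := by
    intro n
    induction n with
    | zero => intro j hj i; exact hbd i j (by omega)
    | succ n ih =>
      intro j hj i
      rcases le_or_gt j (n : ℤ) with hjn | hjn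
      · exact ih j hjn i
      · have hj1 : j = (n : ℤ) + 1 := by omega
        rcases Nat.eq_zero_or_pos n with hn0 | hn1
        · subst hn0
          have : j = 1 := by omega
          subst this
          rcases le_or_gt i 0 with hi | hi
          · exact hbd i 1 (by omega)
          · exact hrow i (by omega)
        · -- now `j ≥ 2`
          have hj2 : (2 : ℤ) ≤ j := by omega
          have hm1 : ∀ i : ℤ, h (i, j - 1) = 0 := fun i => ih (j - 1) (by omega) i
          have hm2 : ∀ i : ℤ, h (i, j - 2) = 0 := fun i => ih (j - 2) (by omega) i
          have h0 : ∀ i : ℤ, i ≤ 1 → h (i, j) = 0 := by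
            intro i hi
            rcases le_or_gt i 0 with hi0 | hi0
            · exact hbd i j (by omega)
            · have : i = 1 := by omega
              subst this
              exact hcol j (by omega)
          by_cases hz : M.p (-1) 1 = 0 ∧ M.p 0 1 = 0 ∧ M.p 1 1 = 0
          · -- degenerate case: use harmonicity at `(i, j)` itself
            refine three_term_zero (fun i => h (i, j)) (M.p (-1) 0) (-1) (M.p 1 0)
              (by simp) h0 (fun i hi => ?_) i
            have H := hharm i j hi (by omega)
            rw [grid_sum_expand] at H
            simp only [show i + (-1 : ℤ) = i - 1 from by ring, show i + (0 : ℤ) = i from by ring,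
              show j + (-1 : ℤ) = j - 1 from by ring, show j + (0 : ℤ) = j from by ring,
              hz.1, hz.2.1, hz.2.2, hp00, hm1, Complex.ofReal_zero, zero_mul, mul_zero,
              add_zero, zero_add] at H
            linear_combination H
          · -- generic case: use harmonicity at `(i, j - 1)`
            refine three_term_zero (fun i => h (i, j)) (M.p (-1) 1) (M.p 0 1) (M.p 1 1)
              (fun ⟨hB, hC, hA⟩ => hz ⟨by exact_mod_cast hA, by exact_mod_cast hB,
                by exact_mod_cast hC⟩) h0 (fun i hi => ?_) i
            have H := hharm i (j - 1) hi (by omega)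
            rw [grid_sum_expand] at H
            simp only [show i + (-1 : ℤ) = i - 1 from by ring, show i + (0 : ℤ) = i from by ring,
              show j - 1 + (-1 : ℤ) = j - 2 from by ring, show j - 1 + (0 : ℤ) = j - 1 from by ring,
              show j - 1 + (1 : ℤ) = j from by ring,
              hm1, hm2, mul_zero, add_zero, zero_add] at H
            linear_combination H
  intro z
  obtain ⟨i, j⟩ := z
  rcases le_or_gt j 0 with hj | hj
  · exact hbd i j (by omega)
  · exact rows j.toNat j (by omega) i
end

section
/- Let (p_{i,j}) be a model with small steps whose kernel K(x,y) = Σ_{(i,j)} p_{i,j} x^{1−i} y^{1−j} − xy satisfies K(0,0) = 0 (equivalently p_{1,1} = 0) and (∂K/∂x)(0,0) ≠ 0 (equivalently p_{0,1} ≠ 0). Let X ∈ ℂ[[y]] be a formal power series with X(0) = 0 and K(X(y), y) = 0. Suppose F ∈ ℂ[[x,y]] is a bivariate formal power series such that F(X(y), y) = 0 (the substitution of the pair (X(y), y) into F is well defined since X(0) = 0) and F(x,0) ≠ 0 as an element of ℂ[[x]]. Then F(x,y)/K(x,y) is a bivariate formal power series, i.e. K divides F in ℂ[[x,y]]. -/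
open Finset

/-- The kernel `K(x,y) = Σ_{(i,j)} p_{i,j} x^{1−i} y^{1−j} − xy` of the model, viewed as an
element of `ℂ[[x,y]]`. -/
noncomputable def kernelPS (M : SmallStepModel) : MvPowerSeries (Fin 2) ℂ :=
  (∑ uv ∈ SmallStepGrid, MvPowerSeries.C (σ := Fin 2) (R := ℂ) ((M.p uv.1 uv.2 : ℝ) : ℂ) *
      MvPowerSeries.X 0 ^ (1 - uv.1).toNat * MvPowerSeries.X 1 ^ (1 - uv.2).toNat)
    - MvPowerSeries.X 0 * MvPowerSeries.X 1

/-- Formal substitution `F(X(y), y)` of a pair `(X(y), y)` into a bivariate power series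
`F ∈ ℂ[[x,y]]`; this is the correct substitution whenever `X` has zero constant term,
since then the coefficient of `yⁿ` only receives contributions from monomials `x^a y^b`
with `a, b ≤ n`. -/
noncomputable def substXY (Xs : PowerSeries ℂ) (F : MvPowerSeries (Fin 2) ℂ) :
    PowerSeries ℂ :=
  PowerSeries.mk fun n => ∑ a ∈ Finset.range (n + 1), ∑ b ∈ Finset.range (n + 1),
    MvPowerSeries.coeff (R := ℂ) (Finsupp.single 0 a + Finsupp.single 1 b) F *
      PowerSeries.coeff (R := ℂ) (n - b) (Xs ^ a)

/-!
Read `ℂ[[x,y]]` as `ℂ[[y]][[x]]`. Then `K(x,0) = p_{1,1} + p_{0,1} x + p_{-1,1} x²` has order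
exactly one in `x`, so Weierstrass division by `K` over the complete local ring `ℂ[[y]]` writes
`F = K Q + R(y)` with a remainder independent of `x`. Substituting `x = X(y)` is a ring
homomorphism that kills `F` and `K` and fixes `R(y)`, hence `R = 0`.
-/

namespace MvPowerSeries

variable (R : Type*) [CommRing R]

noncomputable def finTwoEquiv : MvPowerSeries (Fin 2) R ≃ₐ[R] PowerSeries (PowerSeries R) :=
  (renameEquiv R ((_root_.finSuccEquiv 1).trans (Equiv.optionCongr finOneEquiv))).trans
    (optionEquivLeft Unit R)

variable {R}

theorem coeff_coeff_finTwoEquiv (F : MvPowerSeries (Fin 2) R) (a b : ℕ) :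
    PowerSeries.coeff b (PowerSeries.coeff a (finTwoEquiv R F)) =
      coeff (Finsupp.single 0 a + Finsupp.single 1 b) F := by
  rw [finTwoEquiv, AlgEquiv.trans_apply, PowerSeries.coeff, coeff_coeff_optionEquivLeft]
  set e := (_root_.finSuccEquiv 1).trans (Equiv.optionCongr finOneEquiv)
  have hx : Finsupp.optionElim a (Finsupp.single () b) =
      Finsupp.embDomain e.toEmbedding (Finsupp.single 0 a + Finsupp.single 1 b) := by
    ext (_ | _) <;> simp [e, show (_root_.finSuccEquiv 1) 1 = some 0 from rfl]
  rw [hx]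
  exact coeff_embDomain_rename e.toEmbedding F _

@[simp]
theorem finTwoEquiv_X_zero : finTwoEquiv R (X 0) = PowerSeries.X :=
  (congrArg (optionEquivLeft Unit R) (rename_X _ 0)).trans optionEquivLeft_X_none

@[simp]
theorem finTwoEquiv_X_one : finTwoEquiv R (X 1) = PowerSeries.C PowerSeries.X :=
  (congrArg (optionEquivLeft Unit R) (rename_X _ 1)).trans (optionEquivLeft_X_some ())

@[simp]
theorem finTwoEquiv_C (c : R) : finTwoEquiv R (C c) = PowerSeries.C (PowerSeries.C c) :=
  (congrArg (optionEquivLeft Unit R) (rename_C _ c)).trans (optionEquivLeft_C c)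

end MvPowerSeries

open IsLocalRing

instance PowerSeries.isAdicComplete_maximalIdeal (k : Type*) [Field k] :
    IsAdicComplete (maximalIdeal (PowerSeries k)) (PowerSeries k) := by
  rw [PowerSeries.maximalIdeal_eq_span_X]
  infer_instance

namespace PowerSeries

theorem exists_eq_mul_add_C_of_isUnit_coeff_one {A : Type*} [CommRing A] [IsLocalRing A]
    [IsAdicComplete (maximalIdeal A) A] {g : PowerSeries A}
    (h0 : coeff 0 g ∈ maximalIdeal A) (h1 : IsUnit (coeff 1 g)) (f : PowerSeries A) :
    ∃ q r, f = g * q + C r := by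
  have horder : (g.map (Ideal.Quotient.mk (maximalIdeal A))).order = 1 := by
    rw [← Nat.cast_one, order_eq_nat, coeff_map, Ne, Ideal.Quotient.eq_zero_iff_mem]
    refine ⟨notMem_maximalIdeal.mpr h1, fun i hi => ?_⟩
    rwa [Nat.lt_one_iff.mp hi, coeff_map, Ideal.Quotient.eq_zero_iff_mem]
  have hg : g.map (residue A) ≠ 0 := fun h =>
    (residue_ne_zero_iff_isUnit _).mpr h1 (by rw [← coeff_map, h, map_zero])
  obtain ⟨q, r, hdeg, hfr⟩ := exists_isWeierstrassDivision f hg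
  rw [horder] at hdeg
  refine ⟨q, r.coeff 0, ?_⟩
  rw [hfr, ← Polynomial.coe_C,
    ← Polynomial.eq_C_of_degree_le_zero (Nat.WithBot.lt_one_iff_le_zero.mp hdeg)]

theorem coeff_pow_mul_X_pow_eq_zero {R : Type*} [CommSemiring R] {f : PowerSeries R}
    (hf : constantCoeff f = 0) {n a b : ℕ} (h : n < a + b) : coeff n (f ^ a * X ^ b) = 0 := by
  have hdvd : X ^ (a + b) ∣ f ^ a * X ^ b := by
    rw [pow_add]
    exact mul_dvd_mul (pow_dvd_pow_of_dvd (X_dvd_iff.mpr hf) a) dvd_rfl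
  exact X_pow_dvd_iff.mp hdvd n h

end PowerSeries

open MvPowerSeries

theorem hasSubst_pair_X {Xs : PowerSeries ℂ} (hX0 : PowerSeries.constantCoeff Xs = 0) :
    HasSubst ![Xs, PowerSeries.X] :=
  hasSubst_of_constantCoeff_zero fun i => by
    fin_cases i
    exacts [hX0, PowerSeries.constantCoeff_X]

theorem substXY_eq_subst {Xs : PowerSeries ℂ} (hX0 : PowerSeries.constantCoeff Xs = 0)
    (F : MvPowerSeries (Fin 2) ℂ) :
    substXY Xs F = subst ![Xs, PowerSeries.X] F := by
  let e : ℕ × ℕ → Fin 2 →₀ ℕ := fun p => Finsupp.single 0 p.1 + Finsupp.single 1 p.2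
  have he : Function.Injective e := fun p q h =>
    Prod.ext (by simpa [e] using congrArg (· 0) h) (by simpa [e] using congrArg (· 1) h)
  ext n
  have hterm (d : Fin 2 →₀ ℕ) : coeff d F • coeff (Finsupp.single () n)
      (d.prod fun s k => ![Xs, PowerSeries.X] s ^ k) =
        coeff d F * PowerSeries.coeff n (Xs ^ d 0 * PowerSeries.X ^ d 1) := by
    rw [Finsupp.prod_fintype _ _ fun _ => pow_zero _, Fin.prod_univ_two]
    rfl
  have hsupp : (Function.support fun d : Fin 2 →₀ ℕ =>
      coeff d F * PowerSeries.coeff n (Xs ^ d 0 * PowerSeries.X ^ d 1)) ⊆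
        ((range (n + 1) ×ˢ range (n + 1)).image e : Set _) := by
    intro d hd
    have hle : d 0 + d 1 ≤ n := by
      by_contra! hlt
      exact hd (by simp only [PowerSeries.coeff_pow_mul_X_pow_eq_zero hX0 hlt, mul_zero])
    refine Finset.mem_coe.mpr (Finset.mem_image.mpr ⟨(d 0, d 1), ?_, ?_⟩)
    · simp only [Finset.mem_product, Finset.mem_range]
      omega
    · ext i
      fin_cases i <;> simp [e]
  rw [substXY, PowerSeries.coeff_mk, PowerSeries.coeff, coeff_subst (hasSubst_pair_X hX0),
    finsum_congr hterm, finsum_eq_sum_of_support_subset _ hsupp,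
    Finset.sum_image fun p _ q _ h => he h, Finset.sum_product]
  refine Finset.sum_congr rfl fun a _ => Finset.sum_congr rfl fun b hb => ?_
  simp [e, PowerSeries.coeff_mul_X_pow', Nat.lt_succ_iff.mp (Finset.mem_range.mp hb)]

theorem substXY_add {Xs : PowerSeries ℂ} (hX0 : PowerSeries.constantCoeff Xs = 0)
    (F G : MvPowerSeries (Fin 2) ℂ) :
    substXY Xs (F + G) = substXY Xs F + substXY Xs G := by
  simp only [substXY_eq_subst hX0, subst_add (hasSubst_pair_X hX0)]

theorem substXY_mul {Xs : PowerSeries ℂ} (hX0 : PowerSeries.constantCoeff Xs = 0)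
    (F G : MvPowerSeries (Fin 2) ℂ) :
    substXY Xs (F * G) = substXY Xs F * substXY Xs G := by
  simp only [substXY_eq_subst hX0, subst_mul (hasSubst_pair_X hX0)]

theorem substXY_finTwoEquiv_symm_C (Xs r : PowerSeries ℂ) :
    substXY Xs ((finTwoEquiv ℂ).symm (PowerSeries.C r)) = r := by
  ext n
  have hcoeff (a b : ℕ) : coeff (Finsupp.single 0 a + Finsupp.single 1 b)
      ((finTwoEquiv ℂ).symm (PowerSeries.C r)) = if a = 0 then PowerSeries.coeff b r else 0 := by
    rw [← coeff_coeff_finTwoEquiv, AlgEquiv.apply_symm_apply, PowerSeries.coeff_C]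
    split_ifs <;> simp
  simp only [substXY, Fin.isValue, hcoeff, ite_mul, zero_mul, sum_ite_irrel, sum_const_zero,
    sum_ite_eq', mem_range, lt_add_iff_pos_left, Order.lt_add_one_iff, zero_le, ↓reduceIte,
    pow_zero, PowerSeries.coeff_one, mul_ite, mul_one, mul_zero, PowerSeries.coeff_mk]
  rw [Finset.sum_eq_single_of_mem n (Finset.self_mem_range_succ n) fun b hb hbn =>
    if_neg (by simp at hb; omega)]
  simp

theorem map_constantCoeff_finTwoEquiv_kernelPS (M : SmallStepModel) :
    PowerSeries.map PowerSeries.constantCoeff (finTwoEquiv ℂ (kernelPS M)) =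
      PowerSeries.C ((M.p (-1) 1 : ℝ) : ℂ) * PowerSeries.X ^ 2 +
        PowerSeries.C ((M.p 0 1 : ℝ) : ℂ) * PowerSeries.X +
          PowerSeries.C ((M.p 1 1 : ℝ) : ℂ) := by
  simp [kernelPS, SmallStepGrid, Finset.sum_product, add_assoc]

theorem kernel_divides_of_vanishing_on_branch_general (M : SmallStepModel)
    (hK00 : M.p 1 1 = 0) (hKdx : M.p 0 1 ≠ 0)
    (Xs : PowerSeries ℂ) (hX0 : PowerSeries.constantCoeff (R := ℂ) Xs = 0)
    (hKX : substXY Xs (kernelPS M) = 0)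
    (F : MvPowerSeries (Fin 2) ℂ)
    (hFX : substXY Xs F = 0) :
    ∃ Q : MvPowerSeries (Fin 2) ℂ, F = kernelPS M * Q := by
  set Φ := finTwoEquiv ℂ
  have hKy0 := map_constantCoeff_finTwoEquiv_kernelPS M
  have hKx0 : PowerSeries.coeff 0 (Φ (kernelPS M)) ∈ maximalIdeal (PowerSeries ℂ) := by
    rw [← PowerSeries.ker_coeff_eq_max_ideal, RingHom.mem_ker, ← PowerSeries.coeff_map, hKy0]
    simp [hK00]
  have hKx1 : IsUnit (PowerSeries.coeff 1 (Φ (kernelPS M))) := by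
    rw [PowerSeries.isUnit_iff_constantCoeff, ← PowerSeries.coeff_map, hKy0]
    simpa using hKdx
  obtain ⟨q, r, hqr⟩ := PowerSeries.exists_eq_mul_add_C_of_isUnit_coeff_one hKx0 hKx1 (Φ F)
  have hF : F = kernelPS M * Φ.symm q + Φ.symm (PowerSeries.C r) := by
    apply Φ.injective
    simp [hqr]
  have hr : r = 0 := by
    have h := congrArg (substXY Xs) hF
    rwa [substXY_add hX0, substXY_mul hX0, hKX, hFX, zero_mul, zero_add,
      substXY_finTwoEquiv_symm_C, eq_comm] at h
  exact ⟨Φ.symm q, by rw [hF, hr, map_zero, map_zero, add_zero]⟩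

/-- Weierstrass-type division: if `K(0,0) = 0` (i.e. `p_{1,1} = 0`),
`(∂K/∂x)(0,0) ≠ 0` (i.e. `p_{0,1} ≠ 0`), `X ∈ ℂ[[y]]` satisfies `X(0) = 0` and
`K(X(y), y) = 0`, and `F ∈ ℂ[[x,y]]` satisfies `F(X(y), y) = 0` and `F(x,0) ≠ 0`, then
`K` divides `F` in `ℂ[[x,y]]`. -/
theorem kernel_divides_of_vanishing_on_branch (M : SmallStepModel)
    (hK00 : M.p 1 1 = 0) (hKdx : M.p 0 1 ≠ 0)
    (Xs : PowerSeries ℂ) (hX0 : PowerSeries.constantCoeff (R := ℂ) Xs = 0)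
    (hKX : substXY Xs (kernelPS M) = 0)
    (F : MvPowerSeries (Fin 2) ℂ)
    (hFX : substXY Xs F = 0)
    (hFx0 : ∃ n : ℕ, MvPowerSeries.coeff (R := ℂ) (Finsupp.single 0 n) F ≠ 0) :
    ∃ Q : MvPowerSeries (Fin 2) ℂ, F = kernelPS M * Q :=
  kernel_divides_of_vanishing_on_branch_general M hK00 hKdx Xs hX0 hKX F hFX
end

section
/- For every non-degenerate model with small steps and zero drift and every function g : V° → ℂ, there exists a function f : V → ℂ vanishing on ∂V such that Δf(i,j) = g(i,j) for all (i,j) ∈ V°. In particular, for every n ≥ 1 and every discrete polyharmonic function h of degree n there exists a discrete polyharmonic function f of degree n+1 with Δ̃f = h; i.e. the map Δ̃ : ℋ_{n+1} → ℋ_n is surjective. -/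
/-!
The equation `Δf = g` is solved by recursion along a height function. Non-degeneracy excludes
`p₁₁ = p₁₀ = p₀₁ = 0`, so there are a step `s ∈ {(1,1), (1,0), (0,1)}` of positive weight and
positive integers `a, b` such that `s` is the unique step of positive weight maximising the height
`a u + b v`: take `(a, b) = (1,1)` for `s = (1,1)`, and if `p₁₁ = 0`, `(2,1)` for `s = (1,0)` or
`(1,2)` for `s = (0,1)`. The equation at an interior point `x` expresses `f (x + s)` through `g x`
and values of `f` at points of the quarter plane of smaller height, so it defines `f` by
well-founded recursion on the height, with `f = 0` wherever no equation prescribes a value.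
For `h ∈ ℋ_n` the resulting `f` has `Δ̃f = h`, hence `f ∈ ℋ_{n+1}`.
-/

open Finset

/-- The discrete Laplacian `Δ̃` on complex-valued functions on `ℤ²` (the quarter plane
`V = ℤ_{≥0}²` with interior `V° = {i ≥ 1, j ≥ 1}`): on `V°`,
`Δ̃f(i,j) = Σ_{(u,v)} p_{u,v} f(i+u, j+v) − f(i,j)`, and `Δ̃f = 0` off `V°`. -/
noncomputable def lapC (M : SmallStepModel) (f : ℤ × ℤ → ℂ) : ℤ × ℤ → ℂ :=
  fun z =>
    if 1 ≤ z.1 ∧ 1 ≤ z.2 then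
      (∑ uv ∈ SmallStepGrid, (M.p uv.1 uv.2 : ℂ) * f (z.1 + uv.1, z.2 + uv.2)) - f z
    else 0

/-- `f` vanishes on the boundary of the quarter plane (and outside it). -/
def BoundaryVanishing (f : ℤ × ℤ → ℂ) : Prop :=
  ∀ z : ℤ × ℤ, ¬(1 ≤ z.1 ∧ 1 ≤ z.2) → f z = 0

/-- `f ∈ ℋ_n`: `f` vanishes on the boundary and `Δ̃ⁿ f = 0`. -/
def IsPolyharmonic (M : SmallStepModel) (n : ℕ) (f : ℤ × ℤ → ℂ) : Prop :=
  BoundaryVanishing f ∧ (lapC M)^[n] f = 0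

theorem WellFounded.exists_fix_of_congr {α β : Type*} [Inhabited β] {r : α → α → Prop}
    (hwf : WellFounded r) (F : α → (α → β) → β)
    (hF : ∀ z φ ψ, (∀ y, r y z → φ y = ψ y) → F z φ = F z ψ) :
    ∃ f : α → β, ∀ z, f z = F z f := by
  classical
  let extend (z : α) (rec : ∀ y, r y z → β) (y : α) : β :=
    if h : r y z then rec y h else default
  refine ⟨hwf.fix fun z rec => F z (extend z rec), fun z => ?_⟩
  rw [hwf.fix_eq]
  exact hF z _ _ fun y hy => dif_pos hy

theorem abs_le_one_of_mem_smallStepGrid {u v : ℤ} (h : (u, v) ∈ SmallStepGrid) :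
    -1 ≤ u ∧ u ≤ 1 ∧ -1 ≤ v ∧ v ≤ 1 := by
  simp only [SmallStepGrid, mem_product, mem_insert, mem_singleton] at h
  omega

namespace SmallStepModel

theorem mem_grid_of_p_ne_zero (M : SmallStepModel) {u v : ℤ} (h : M.p u v ≠ 0) :
    (u, v) ∈ SmallStepGrid :=
  (M.supp u v h).1

theorem le_one_of_p_ne_zero (M : SmallStepModel) {u v : ℤ} (h : M.p u v ≠ 0) :
    u ≤ 1 ∧ v ≤ 1 := by
  obtain ⟨-, hu, -, hv⟩ := abs_le_one_of_mem_smallStepGrid (M.mem_grid_of_p_ne_zero h)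
  exact ⟨hu, hv⟩

theorem NonDegenerate.p_northeast_ne_zero {M : SmallStepModel} (hnd : M.NonDegenerate) :
    M.p 1 1 ≠ 0 ∨ M.p 1 0 ≠ 0 ∨ M.p 0 1 ≠ 0 := by
  have h := hnd 7
  simp only [cyc] at h
  tauto

end SmallStepModel

def height (a b : ℤ) (z : ℤ × ℤ) : ℤ := a * z.1 + b * z.2

section Height

variable {a b : ℤ}

theorem height_add (z w : ℤ × ℤ) : height a b (z + w) = height a b z + height a b w := by
  simp only [height, Prod.fst_add, Prod.snd_add]
  ring

theorem toNat_height_add_lt_toNat (ha : 0 ≤ a) (hb : 0 ≤ b) {w u s : ℤ × ℤ}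
    (hw : 1 ≤ w.1 ∧ 1 ≤ w.2) (hu : -1 ≤ u.1 ∧ -1 ≤ u.2) (h : height a b u < height a b s) :
    (height a b (w + u)).toNat < (height a b (w + s)).toNat := by
  have h_nonneg : 0 ≤ height a b (w + u) :=
    add_nonneg (mul_nonneg ha (by simp only [Prod.fst_add]; omega))
      (mul_nonneg hb (by simp only [Prod.snd_add]; omega))
  rw [Int.toNat_lt_toNat (by rw [height_add] at h_nonneg ⊢; linarith), height_add, height_add]
  linarith

end Height

def SolvesPoisson (M : SmallStepModel) (f g : ℤ × ℤ → ℂ) : Prop :=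
  ∀ i j : ℤ, 1 ≤ i → 1 ≤ j →
    (∑ uv ∈ SmallStepGrid, (M.p uv.1 uv.2 : ℂ) * f (i + uv.1, j + uv.2)) - f (i, j) = g (i, j)

theorem exists_solvesPoisson_of_dominant_step (M : SmallStepModel) {s : ℤ × ℤ}
    (hs : 0 ≤ s.1 ∧ 0 ≤ s.2) (hps : M.p s.1 s.2 ≠ 0) {a b : ℤ} (ha : 0 ≤ a) (hb : 0 ≤ b)
    (hs_pos : 0 < height a b s)
    (hdom : ∀ u v, M.p u v ≠ 0 → (u, v) ≠ s → height a b (u, v) < height a b s)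
    (g : ℤ × ℤ → ℂ) :
    ∃ f, BoundaryVanishing f ∧ SolvesPoisson M f g := by
  have hps' : (M.p s.1 s.2 : ℂ) ≠ 0 := by exact_mod_cast hps
  let F (z : ℤ × ℤ) (f : ℤ × ℤ → ℂ) : ℂ :=
    if 1 ≤ (z - s).1 ∧ 1 ≤ (z - s).2 then
      (g (z - s) + f (z - s)
        - ∑ uv ∈ SmallStepGrid.erase s, (M.p uv.1 uv.2 : ℂ) * f (z - s + uv)) / M.p s.1 s.2
    else 0
  have hF : ∀ z φ ψ, (∀ y, (height a b y).toNat < (height a b z).toNat → φ y = ψ y) →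
      F z φ = F z ψ := by
    intro z φ ψ h
    simp only [F]
    split_ifs with hz
    · obtain ⟨w, rfl⟩ : ∃ w, z = w + s := ⟨z - s, (sub_add_cancel z s).symm⟩
      rw [add_sub_cancel_right] at hz ⊢
      congr 2
      · have hlt := toNat_height_add_lt_toNat ha hb hz (u := 0) (by simp)
          (by simpa [height] using hs_pos)
        rw [add_zero] at hlt
        rw [h w hlt]
      · refine Finset.sum_congr rfl fun uv huv => ?_
        obtain ⟨hne, hgrid⟩ := Finset.mem_erase.mp huv
        obtain ⟨hu, -, hv, -⟩ := abs_le_one_of_mem_smallStepGrid hgrid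
        by_cases hp : M.p uv.1 uv.2 = 0
        · simp [hp]
        · rw [h _ (toNat_height_add_lt_toNat ha hb hz ⟨hu, hv⟩ (hdom _ _ hp hne))]
    · rfl
  obtain ⟨f, hf⟩ := (measure fun z => (height a b z).toNat).wf.exists_fix_of_congr F hF
  refine ⟨f, fun z hz => ?_, fun i j hi hj => ?_⟩
  · rw [hf]
    simp only [F, Prod.fst_sub, Prod.snd_sub]
    rw [if_neg (by omega)]
  · have hfs := hf ((i, j) + s)
    simp only [F, add_sub_cancel_right, if_pos (And.intro hi hj)] at hfs
    have hshift : ∀ uv : ℤ × ℤ, (i, j) + uv = (i + uv.1, j + uv.2) := fun _ => rfl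
    simp only [hshift] at hfs
    rw [← Finset.add_sum_erase _ _ (M.mem_grid_of_p_ne_zero hps), hfs, mul_div_cancel₀ _ hps']
    ring

theorem exists_solvesPoisson_of_nonDegenerate {M : SmallStepModel} (hnd : M.NonDegenerate)
    (g : ℤ × ℤ → ℂ) : ∃ f, BoundaryVanishing f ∧ SolvesPoisson M f g := by
  by_cases h11 : M.p 1 1 = 0
  · have h11' : ∀ u v, M.p u v ≠ 0 → ¬(u = 1 ∧ v = 1) := by
      rintro u v hp ⟨rfl, rfl⟩
      exact hp h11
    rcases hnd.p_northeast_ne_zero.resolve_left (not_not.mpr h11) with h10 | h01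
    · refine exists_solvesPoisson_of_dominant_step M (s := (1, 0)) (a := 2) (b := 1)
        (by norm_num) h10 (by norm_num) (by norm_num) (by norm_num [height]) ?_ g
      intro u v hp hne
      have := M.le_one_of_p_ne_zero hp
      have := h11' u v hp
      simp only [height, ne_eq, Prod.mk.injEq] at hne ⊢
      omega
    · refine exists_solvesPoisson_of_dominant_step M (s := (0, 1)) (a := 1) (b := 2)
        (by norm_num) h01 (by norm_num) (by norm_num) (by norm_num [height]) ?_ g
      intro u v hp hne
      have := M.le_one_of_p_ne_zero hp
      have := h11' u v hp
      simp only [height, ne_eq, Prod.mk.injEq] at hne ⊢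
      omega
  · refine exists_solvesPoisson_of_dominant_step M (s := (1, 1)) (a := 1) (b := 1)
      (by norm_num) h11 (by norm_num) (by norm_num) (by norm_num [height]) ?_ g
    intro u v hp hne
    have := M.le_one_of_p_ne_zero hp
    simp only [height, ne_eq, Prod.mk.injEq] at hne ⊢
    omega

theorem lapC_eq_of_solvesPoisson {M : SmallStepModel} {f g : ℤ × ℤ → ℂ}
    (hf : SolvesPoisson M f g) (hg : BoundaryVanishing g) : lapC M f = g := by
  funext z
  unfold lapC
  split_ifs with hz
  · exact hf z.1 z.2 hz.1 hz.2
  · exact (hg z hz).symm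

theorem laplacian_surjective_general (M : SmallStepModel)
    (hnd : M.NonDegenerate) :
    (∀ g : ℤ × ℤ → ℂ, ∃ f : ℤ × ℤ → ℂ, BoundaryVanishing f ∧
      ∀ i j : ℤ, 1 ≤ i → 1 ≤ j →
        (∑ uv ∈ SmallStepGrid, (M.p uv.1 uv.2 : ℂ) * f (i + uv.1, j + uv.2)) - f (i, j)
          = g (i, j)) ∧
    (∀ n : ℕ, 1 ≤ n → ∀ h : ℤ × ℤ → ℂ, IsPolyharmonic M n h →
      ∃ f : ℤ × ℤ → ℂ, IsPolyharmonic M (n + 1) f ∧ lapC M f = h) := by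
  have hsolve := exists_solvesPoisson_of_nonDegenerate hnd
  refine ⟨hsolve, fun n _ h hh => ?_⟩
  obtain ⟨f, hfb, hf⟩ := hsolve h
  have hlap := lapC_eq_of_solvesPoisson hf hh.1
  exact ⟨f, ⟨hfb, by rw [Function.iterate_succ_apply, hlap, hh.2]⟩, hlap⟩

/-- For every non-degenerate model with small steps and zero drift, every function `g` on
the interior `V°` of the quarter plane admits a preimage under the discrete Laplacian
vanishing on `∂V`; in particular `Δ̃ : ℋ_{n+1} → ℋ_n` is surjective for every `n ≥ 1`. -/
theorem laplacian_surjective (M : SmallStepModel)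
    (hnd : M.NonDegenerate) (hzd : M.ZeroDrift) :
    (∀ g : ℤ × ℤ → ℂ, ∃ f : ℤ × ℤ → ℂ, BoundaryVanishing f ∧
      ∀ i j : ℤ, 1 ≤ i → 1 ≤ j →
        (∑ uv ∈ SmallStepGrid, (M.p uv.1 uv.2 : ℂ) * f (i + uv.1, j + uv.2)) - f (i, j)
          = g (i, j)) ∧
    (∀ n : ℕ, 1 ≤ n → ∀ h : ℤ × ℤ → ℂ, IsPolyharmonic M n h →
      ∃ f : ℤ × ℤ → ℂ, IsPolyharmonic M (n + 1) f ∧ lapC M f = h) :=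
  laplacian_surjective_general M hnd
end

section
/- Let h : ℝ² → ℝ be twice continuously differentiable on an open neighborhood of [0,∞)², and suppose there are constants C > 0 and c > 0 such that |h(u,v)|, the norm of the first derivative of h, and the norm of the second derivative of h are all bounded by C·e^{c(u+v)} for (u,v) ∈ [0,∞)², and suppose h(u,0) = 0 for all u ≥ 0 and h(0,v) = 0 for all v ≥ 0. Then for every real x > c, the limit as y → ∞ of y²·∫_0^∞∫_0^∞ e^{−ux−vy} h(u,v) du dv equals ∫_0^∞ e^{−ux} (∂h/∂v)(u,0) du; and symmetrically, for every real y > c, the limit as x → ∞ of x²·∫_0^∞∫_0^∞ e^{−ux−vy} h(u,v) du dv equals ∫_0^∞ e^{−vy} (∂h/∂u)(0,v) dv. -/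
/-!
For fixed `u`, Taylor's formula in `v` at `v = 0`, where `h` vanishes, gives
`|h (u, v) - v ∂ᵥh (u, 0)| ≤ C e^{c(u+v)} v²`. Since `∫₀^∞ v e^{-vy} dv = 1/y²` and
`∫₀^∞ v² e^{-(y-c)v} dv = 2/(y-c)³`, integrating against `e^{-ux-vy}` yields
`|y² ℒ(h)(x,y) - ℒ₂(h)(x)| ≤ 2C/(x-c) · y²/(y-c)³`, which tends to `0`.
The second limit is the first one for `h ∘ Prod.swap`, by Fubini.
-/

open MeasureTheory Filter Set Topology Real
open scoped Nat

theorem integral_pow_mul_exp_neg_mul_Ioi (n : ℕ) {b : ℝ} (hb : 0 < b) :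
    ∫ t in Ioi (0 : ℝ), t ^ n * exp (-(b * t)) = n ! / b ^ (n + 1) := by
  have := integral_rpow_mul_exp_neg_mul_Ioi (a := n + 1) (by positivity) hb
  rw [add_sub_cancel_right, Gamma_nat_eq_factorial, ← Nat.cast_add_one, rpow_natCast,
    one_div_pow, one_div_mul_eq_div] at this
  simpa only [rpow_natCast] using this

theorem integrableOn_pow_mul_exp_neg_mul_Ioi (n : ℕ) {b : ℝ} (hb : 0 < b) :
    IntegrableOn (fun t : ℝ => t ^ n * exp (-(b * t))) (Ioi 0) :=
  Integrable.of_integral_ne_zero <| by rw [integral_pow_mul_exp_neg_mul_Ioi n hb]; positivity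

theorem integrableOn_exp_neg_mul_of_abs_le {f : ℝ → ℝ} {K c b : ℝ} (hcb : c < b)
    (hf : ContinuousOn f (Ici 0)) (hbound : ∀ t, 0 ≤ t → |f t| ≤ K * exp (c * t)) :
    IntegrableOn (fun t => exp (-(t * b)) * f t) (Ioi 0) := by
  refine ((integrableOn_pow_mul_exp_neg_mul_Ioi 0 (sub_pos.2 hcb)).const_mul K).mono' ?_ ?_
  · exact ((continuous_exp.comp (by fun_prop)).continuousOn.mul
      (hf.mono Ioi_subset_Ici_self)).aestronglyMeasurable measurableSet_Ioi
  · filter_upwards [ae_restrict_mem measurableSet_Ioi] with t ht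
    calc ‖exp (-(t * b)) * f t‖ = exp (-(t * b)) * |f t| := by
          rw [norm_mul, norm_of_nonneg (exp_pos _).le, norm_eq_abs]
      _ ≤ exp (-(t * b)) * (K * exp (c * t)) := by gcongr; exact hbound t ht.le
      _ = K * (t ^ 0 * exp (-((b - c) * t))) := by
          rw [pow_zero, one_mul, mul_left_comm, ← exp_add]; ring_nf

section Taylor

variable {E F : Type*} [NormedAddCommGroup E] [NormedSpace ℝ E]
  [NormedAddCommGroup F] [NormedSpace ℝ F]

theorem norm_sub_sub_smul_deriv_le {g g' g'' : ℝ → F} {M v : ℝ} (hv : 0 ≤ v)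
    (hg : ∀ t ∈ Icc 0 v, HasDerivAt g (g' t) t) (hg' : ∀ t ∈ Icc 0 v, HasDerivAt g' (g'' t) t)
    (hM : ∀ t ∈ Icc 0 v, ‖g'' t‖ ≤ M) :
    ‖g v - g 0 - v • g' 0‖ ≤ M * v ^ 2 := by
  have hM0 : 0 ≤ M := (norm_nonneg _).trans (hM 0 ⟨le_rfl, hv⟩)
  have hg'_lip : ∀ t ∈ Icc 0 v, ‖g' t - g' 0‖ ≤ M * v := fun t ht =>
    (norm_image_sub_le_of_norm_deriv_le_segment' (fun s hs => (hg' s hs).hasDerivWithinAt)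
      (fun s hs => hM s (Ico_subset_Icc_self hs)) t ht).trans
      (by simpa using mul_le_mul_of_nonneg_left ht.2 hM0)
  have := norm_image_sub_le_of_norm_deriv_le_segment' (f := fun t => g t - t • g' 0)
    (fun t ht => ((hg t ht).sub ((hasDerivAt_id t).smul_const (g' 0))).hasDerivWithinAt)
    (fun t ht => by simpa using hg'_lip t (Ico_subset_Icc_self ht)) v ⟨hv, le_rfl⟩
  simpa [sq, mul_assoc, sub_right_comm] using this

theorem norm_sub_sub_smul_fderiv_le {f : E → F} {U : Set E} (hU : IsOpen U)
    (hf : ContDiffOn ℝ 2 f U) {p e : E} {v M : ℝ} (hv : 0 ≤ v)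
    (hseg : ∀ t ∈ Icc 0 v, p + t • e ∈ U)
    (hM : ∀ t ∈ Icc 0 v, ‖iteratedFDeriv ℝ 2 f (p + t • e)‖ ≤ M) :
    ‖f (p + v • e) - f p - v • fderiv ℝ f p e‖ ≤ M * ‖e‖ ^ 2 * v ^ 2 := by
  have hline (t : ℝ) : HasDerivAt (fun s : ℝ => p + s • e) e t := by
    simpa using ((hasDerivAt_id t).smul_const e).const_add p
  have hdf (z) (hz : z ∈ U) : DifferentiableAt ℝ f z :=
    (hf.differentiableOn (by norm_num)).differentiableAt (hU.mem_nhds hz)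
  have hdf' (z) (hz : z ∈ U) : DifferentiableAt ℝ (fderiv ℝ f) z :=
    ((hf.fderiv_of_isOpen hU (m := 1) (by norm_num)).differentiableOn one_ne_zero z
      hz).differentiableAt (hU.mem_nhds hz)
  have hsecond (z : E) : ‖fderiv ℝ (fderiv ℝ f) z e e‖ ≤ ‖iteratedFDeriv ℝ 2 f z‖ * ‖e‖ ^ 2 := by
    rw [← norm_iteratedFDeriv_fderiv (n := 1), norm_iteratedFDeriv_one, sq, ← mul_assoc]
    exact (fderiv ℝ (fderiv ℝ f) z).le_opNorm₂ e e
  have hg (t : ℝ) (ht : t ∈ Icc 0 v) :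
      HasDerivAt (fun s : ℝ => f (p + s • e)) (fderiv ℝ f (p + t • e) e) t :=
    (hdf _ (hseg t ht)).hasFDerivAt.comp_hasDerivAt t (hline t)
  have hg' (t : ℝ) (ht : t ∈ Icc 0 v) :
      HasDerivAt (fun s : ℝ => fderiv ℝ f (p + s • e) e)
        (fderiv ℝ (fderiv ℝ f) (p + t • e) e e) t := by
    have h : HasDerivAt (fun s : ℝ => fderiv ℝ f (p + s • e))
        (fderiv ℝ (fderiv ℝ f) (p + t • e) e) t :=
      (hdf' _ (hseg t ht)).hasFDerivAt.comp_hasDerivAt t (hline t)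
    simpa using h.clm_apply (hasDerivAt_const t e)
  simpa using norm_sub_sub_smul_deriv_le hv hg hg'
    (fun t ht => (hsecond _).trans (mul_le_mul_of_nonneg_right (hM t ht) (by positivity)))

end Taylor

section Swap

variable {E F G : Type*} [NormedAddCommGroup E] [NormedSpace ℝ E] [NormedAddCommGroup F]
  [NormedSpace ℝ F] [NormedAddCommGroup G] [NormedSpace ℝ G]

theorem norm_iteratedFDeriv_comp_swap (f : E × F → G) (n : ℕ) (p : F × E) :
    ‖iteratedFDeriv ℝ n (f ∘ Prod.swap) p‖ = ‖iteratedFDeriv ℝ n f p.swap‖ :=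
  (LinearIsometryEquiv.prodComm ℝ F E).norm_iteratedFDeriv_comp_right f p n

theorem fderiv_comp_swap_apply (f : E × F → G) (p q : F × E) :
    fderiv ℝ (f ∘ Prod.swap) p q = fderiv ℝ f p.swap q.swap :=
  congrArg (· q) ((ContinuousLinearEquiv.prodComm ℝ F E).comp_right_fderiv (f := f) (x := p))

end Swap

noncomputable def quadrantLaplace (h : ℝ × ℝ → ℝ) (x y : ℝ) : ℝ :=
  ∫ u in Ioi (0 : ℝ), ∫ v in Ioi (0 : ℝ), exp (-(u * x + v * y)) * h (u, v)

theorem integrable_exp_neg_mul_quadrant_of_abs_le {H : ℝ × ℝ → ℝ} {K c x y : ℝ}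
    (hx : c < x) (hy : c < y)
    (hH : ContinuousOn H (Ici 0 ×ˢ Ici 0))
    (hbound : ∀ u v, 0 ≤ u → 0 ≤ v → |H (u, v)| ≤ K * exp (c * (u + v))) :
    Integrable (fun p : ℝ × ℝ => exp (-(p.1 * x + p.2 * y)) * H p)
      ((volume.restrict (Ioi 0)).prod (volume.restrict (Ioi 0))) := by
  have hdom := ((integrableOn_pow_mul_exp_neg_mul_Ioi 0 (sub_pos.2 hx)).const_mul K).mul_prod
    (integrableOn_pow_mul_exp_neg_mul_Ioi 0 (sub_pos.2 hy))
  rw [Measure.prod_restrict] at hdom ⊢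
  refine hdom.mono' ?_ ?_
  · refine ContinuousOn.aestronglyMeasurable ?_ (measurableSet_Ioi.prod measurableSet_Ioi)
    exact (continuous_exp.comp (by fun_prop)).continuousOn.mul
      (hH.mono (prod_mono Ioi_subset_Ici_self Ioi_subset_Ici_self))
  · filter_upwards [ae_restrict_mem (measurableSet_Ioi.prod measurableSet_Ioi)] with p hp
    calc ‖exp (-(p.1 * x + p.2 * y)) * H p‖ = exp (-(p.1 * x + p.2 * y)) * |H p| := by
          rw [norm_mul, norm_of_nonneg (exp_pos _).le, norm_eq_abs]
      _ ≤ exp (-(p.1 * x + p.2 * y)) * (K * exp (c * (p.1 + p.2))) := by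
          gcongr; exact hbound p.1 p.2 hp.1.le hp.2.le
      _ = K * (p.1 ^ 0 * exp (-((x - c) * p.1))) * (p.2 ^ 0 * exp (-((y - c) * p.2))) := by
          rw [mul_left_comm, ← exp_add]; simp only [pow_zero, one_mul]
          rw [mul_assoc, ← exp_add]; ring_nf

theorem quadrantLaplace_comp_swap {h : ℝ × ℝ → ℝ} {x y : ℝ}
    (hint : Integrable (fun p : ℝ × ℝ => exp (-(p.1 * x + p.2 * y)) * h p)
      ((volume.restrict (Ioi 0)).prod (volume.restrict (Ioi 0)))) :
    quadrantLaplace (h ∘ Prod.swap) y x = quadrantLaplace h x y := by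
  rw [quadrantLaplace, quadrantLaplace,
    integral_integral_swap (f := fun u v => exp (-(u * x + v * y)) * h (u, v)) hint]
  simp only [Function.comp_apply, Prod.swap_prod_mk, add_comm]

theorem abs_sq_mul_integral_exp_neg_mul_sub_le {g : ℝ → ℝ} {a K c y : ℝ} (hy : 0 < y)
    (hcy : c < y) (hg : IntegrableOn (fun v => exp (-(v * y)) * g v) (Ioi 0))
    (htaylor : ∀ v, 0 < v → |g v - v * a| ≤ K * exp (c * v) * v ^ 2) :
    |y ^ 2 * (∫ v in Ioi (0 : ℝ), exp (-(v * y)) * g v) - a| ≤ 2 * K * (y ^ 2 / (y - c) ^ 3) := by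
  have hyc : 0 < y - c := sub_pos.2 hcy
  have hfirst : ∀ v : ℝ, exp (-(v * y)) * (v * a) = a * (v ^ 1 * exp (-(y * v))) := fun v => by
    ring_nf
  have hfirst_int : IntegrableOn (fun v => exp (-(v * y)) * (v * a)) (Ioi 0) := by
    rw [funext hfirst]
    exact (integrableOn_pow_mul_exp_neg_mul_Ioi 1 hy).const_mul a
  have hfirst_eq : ∫ v in Ioi (0 : ℝ), exp (-(v * y)) * (v * a) = a / y ^ 2 := by
    simp only [hfirst, integral_const_mul, integral_pow_mul_exp_neg_mul_Ioi 1 hy]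
    norm_num
    ring
  have hremainder : y ^ 2 * (∫ v in Ioi (0 : ℝ), exp (-(v * y)) * g v) - a
      = y ^ 2 * ∫ v in Ioi (0 : ℝ), exp (-(v * y)) * (g v - v * a) := by
    simp_rw [mul_sub]
    rw [integral_sub hg hfirst_int, hfirst_eq, mul_sub, mul_div_cancel₀ _ (pow_ne_zero 2 hy.ne')]
  have hbound : ‖∫ v in Ioi (0 : ℝ), exp (-(v * y)) * (g v - v * a)‖ ≤ K * (2 / (y - c) ^ 3) := by
    have h2 := integral_pow_mul_exp_neg_mul_Ioi 2 hyc
    norm_num at h2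
    rw [← h2, ← integral_const_mul]
    refine norm_integral_le_of_norm_le ((integrableOn_pow_mul_exp_neg_mul_Ioi 2 hyc).const_mul K) ?_
    filter_upwards [ae_restrict_mem measurableSet_Ioi] with v hv
    calc ‖exp (-(v * y)) * (g v - v * a)‖ = exp (-(v * y)) * |g v - v * a| := by
          rw [norm_mul, norm_of_nonneg (exp_pos _).le, norm_eq_abs]
      _ ≤ exp (-(v * y)) * (K * exp (c * v) * v ^ 2) := by gcongr; exact htaylor v hv
      _ = K * (v ^ 2 * exp (-((y - c) * v))) := by
          rw [show exp (-(v * y)) * (K * exp (c * v) * v ^ 2)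
            = K * v ^ 2 * (exp (-(v * y)) * exp (c * v)) by ring, ← exp_add]
          ring_nf
  calc |y ^ 2 * (∫ v in Ioi (0 : ℝ), exp (-(v * y)) * g v) - a|
      = y ^ 2 * ‖∫ v in Ioi (0 : ℝ), exp (-(v * y)) * (g v - v * a)‖ := by
        rw [hremainder, abs_mul, abs_of_pos (pow_pos hy 2), norm_eq_abs]
    _ ≤ y ^ 2 * (K * (2 / (y - c) ^ 3)) := by gcongr
    _ = 2 * K * (y ^ 2 / (y - c) ^ 3) := by ring

theorem abs_sq_mul_quadrantLaplace_sub_le {H : ℝ × ℝ → ℝ} {a : ℝ → ℝ} {K c x y : ℝ}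
    (hy : 0 < y) (hx : c < x) (hcy : c < y) (hH : ContinuousOn H (Ici 0 ×ˢ Ici 0))
    (hHbound : ∀ u v, 0 ≤ u → 0 ≤ v → |H (u, v)| ≤ K * exp (c * (u + v)))
    (ha : ContinuousOn a (Ici 0)) (habound : ∀ u, 0 ≤ u → |a u| ≤ K * exp (c * u))
    (htaylor : ∀ u v, 0 ≤ u → 0 ≤ v → |H (u, v) - v * a u| ≤ K * exp (c * (u + v)) * v ^ 2) :
    |y ^ 2 * quadrantLaplace H x y - ∫ u in Ioi (0 : ℝ), exp (-(u * x)) * a u|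
      ≤ 2 * K / (x - c) * (y ^ 2 / (y - c) ^ 3) := by
  set ε := 2 * K * (y ^ 2 / (y - c) ^ 3)
  have hinner : Integrable (fun u => ∫ v in Ioi (0 : ℝ), exp (-(u * x + v * y)) * H (u, v))
      (volume.restrict (Ioi 0)) :=
    (integrable_exp_neg_mul_quadrant_of_abs_le hx hcy hH hHbound).integral_prod_left
  have hfactor (u : ℝ) : ∫ v in Ioi (0 : ℝ), exp (-(u * x + v * y)) * H (u, v)
      = exp (-(u * x)) * ∫ v in Ioi (0 : ℝ), exp (-(v * y)) * H (u, v) := by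
    rw [← integral_const_mul]
    simp only [neg_add, exp_add, mul_assoc]
  have hslice (u : ℝ) (hu : 0 < u) :
      ‖y ^ 2 * (∫ v in Ioi (0 : ℝ), exp (-(u * x + v * y)) * H (u, v)) - exp (-(u * x)) * a u‖
        ≤ ε * (u ^ 0 * exp (-((x - c) * u))) := by
    have hint : IntegrableOn (fun v => exp (-(v * y)) * H (u, v)) (Ioi 0) :=
      integrableOn_exp_neg_mul_of_abs_le (K := K * exp (c * u)) hcy
        (hH.comp (by fun_prop) fun v hv => ⟨hu.le, hv⟩) fun v hv => by
          simpa only [mul_add, exp_add, mul_assoc] using hHbound u v hu.le hv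
    have hest := abs_sq_mul_integral_exp_neg_mul_sub_le (a := a u) (K := K * exp (c * u)) hy hcy
      hint fun v hv => (htaylor u v hu.le hv.le).trans_eq (by rw [mul_add, exp_add]; ring)
    rw [hfactor, norm_eq_abs, show ∀ A B C : ℝ, y ^ 2 * (A * B) - A * C = A * (y ^ 2 * B - C) by
      intros; ring, abs_mul, abs_of_pos (exp_pos _)]
    calc exp (-(u * x)) * |y ^ 2 * (∫ v in Ioi (0 : ℝ), exp (-(v * y)) * H (u, v)) - a u|
        ≤ exp (-(u * x)) * (2 * (K * exp (c * u)) * (y ^ 2 / (y - c) ^ 3)) := by gcongr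
      _ = ε * (u ^ 0 * exp (-((x - c) * u))) := by
        rw [show exp (-(u * x)) * (2 * (K * exp (c * u)) * (y ^ 2 / (y - c) ^ 3))
          = ε * (exp (-(u * x)) * exp (c * u)) by ring, ← exp_add]
        ring_nf
  calc |y ^ 2 * quadrantLaplace H x y - ∫ u in Ioi (0 : ℝ), exp (-(u * x)) * a u|
      = ‖∫ u in Ioi (0 : ℝ), (y ^ 2 * (∫ v in Ioi (0 : ℝ), exp (-(u * x + v * y)) * H (u, v))
          - exp (-(u * x)) * a u)‖ := by
        rw [integral_sub (hinner.const_mul _) (integrableOn_exp_neg_mul_of_abs_le hx ha habound),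
          integral_const_mul, norm_eq_abs, quadrantLaplace]
    _ ≤ ∫ u in Ioi (0 : ℝ), ε * (u ^ 0 * exp (-((x - c) * u))) :=
        norm_integral_le_of_norm_le
          ((integrableOn_pow_mul_exp_neg_mul_Ioi 0 (sub_pos.2 hx)).const_mul ε)
          ((ae_restrict_iff' measurableSet_Ioi).2 (.of_forall hslice))
    _ = 2 * K / (x - c) * (y ^ 2 / (y - c) ^ 3) := by
        rw [integral_const_mul, integral_pow_mul_exp_neg_mul_Ioi 0 (sub_pos.2 hx)]
        ring

theorem tendsto_sq_div_sub_pow_three_atTop (c : ℝ) :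
    Tendsto (fun y : ℝ => y ^ 2 / (y - c) ^ 3) atTop (𝓝 0) := by
  have hinv : Tendsto (fun y : ℝ => (y - c)⁻¹) atTop (𝓝 0) :=
    tendsto_inv_atTop_zero.comp (tendsto_atTop_add_const_right _ (-c) tendsto_id)
  have hpoly : Tendsto (fun t : ℝ => (1 + c * t) ^ 2 * t) (𝓝 0) (𝓝 0) :=
    (by fun_prop : Continuous fun t : ℝ => (1 + c * t) ^ 2 * t).tendsto' 0 0 (by simp)
  refine (hpoly.comp hinv).congr' ?_
  filter_upwards [eventually_gt_atTop c] with y hy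
  have : y - c ≠ 0 := (sub_pos.2 hy).ne'
  simp only [Function.comp_apply]
  field_simp
  ring

theorem tendsto_sq_mul_quadrantLaplace_of_taylor {H : ℝ × ℝ → ℝ} {a : ℝ → ℝ} {K c x : ℝ}
    (hc : 0 ≤ c) (hx : c < x) (hH : ContinuousOn H (Ici 0 ×ˢ Ici 0))
    (hHbound : ∀ u v, 0 ≤ u → 0 ≤ v → |H (u, v)| ≤ K * exp (c * (u + v)))
    (ha : ContinuousOn a (Ici 0)) (habound : ∀ u, 0 ≤ u → |a u| ≤ K * exp (c * u))
    (htaylor : ∀ u v, 0 ≤ u → 0 ≤ v → |H (u, v) - v * a u| ≤ K * exp (c * (u + v)) * v ^ 2) :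
    Tendsto (fun y => y ^ 2 * quadrantLaplace H x y) atTop
      (𝓝 (∫ u in Ioi (0 : ℝ), exp (-(u * x)) * a u)) := by
  rw [tendsto_iff_norm_sub_tendsto_zero]
  refine squeeze_zero' (.of_forall fun _ => norm_nonneg _) ?_
    (by simpa using (tendsto_sq_div_sub_pow_three_atTop c).const_mul (2 * K / (x - c)))
  filter_upwards [eventually_gt_atTop c] with y hy
  exact abs_sq_mul_quadrantLaplace_sub_le (hc.trans_lt hy) hx hy hH hHbound ha habound htaylor

theorem tendsto_sq_mul_quadrantLaplace {h : ℝ × ℝ → ℝ} {C c x : ℝ} (hc : 0 ≤ c) (hx : c < x)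
    (hsmooth : ∃ U : Set (ℝ × ℝ), IsOpen U ∧ Ici 0 ×ˢ Ici 0 ⊆ U ∧ ContDiffOn ℝ 2 h U)
    (hbound : ∀ u v : ℝ, 0 ≤ u → 0 ≤ v →
      |h (u, v)| ≤ C * exp (c * (u + v)) ∧
      ‖iteratedFDeriv ℝ 1 h (u, v)‖ ≤ C * exp (c * (u + v)) ∧
      ‖iteratedFDeriv ℝ 2 h (u, v)‖ ≤ C * exp (c * (u + v)))
    (hrow : ∀ u : ℝ, 0 ≤ u → h (u, 0) = 0) :
    Tendsto (fun y => y ^ 2 * quadrantLaplace h x y) atTop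
      (𝓝 (∫ u in Ioi (0 : ℝ), exp (-(u * x)) * fderiv ℝ h (u, 0) (0, 1))) := by
  obtain ⟨U, hU, hQ, hf⟩ := hsmooth
  have hmem (u v : ℝ) (hu : 0 ≤ u) (hv : 0 ≤ v) : (u, v) ∈ U := hQ ⟨hu, hv⟩
  have hC : 0 ≤ C := nonneg_of_mul_nonneg_left
    ((abs_nonneg _).trans (hbound 0 0 le_rfl le_rfl).1) (exp_pos _)
  refine tendsto_sq_mul_quadrantLaplace_of_taylor hc hx (hf.continuousOn.mono hQ)
    (fun u v hu hv => (hbound u v hu hv).1) ?_ (fun u hu => ?_) (fun u v hu hv => ?_)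
  · have haxis : Continuous fun u : ℝ => (u, (0 : ℝ)) := by fun_prop
    exact ((hf.continuousOn_fderiv_of_isOpen hU (by norm_num)).comp haxis.continuousOn
      fun u hu => hmem u 0 hu le_rfl).clm_apply continuousOn_const
  · calc |fderiv ℝ h (u, 0) (0, 1)| ≤ ‖fderiv ℝ h (u, 0)‖ * ‖((0 : ℝ), (1 : ℝ))‖ :=
          (fderiv ℝ h (u, 0)).le_opNorm _
      _ ≤ C * exp (c * u) := by simpa using (hbound u 0 hu le_rfl).2.1
  · have hsecond (t : ℝ) (ht : t ∈ Icc 0 v) :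
        ‖iteratedFDeriv ℝ 2 h ((u, 0) + t • (0, 1))‖ ≤ C * exp (c * (u + v)) := by
      simpa using (hbound u t hu ht.1).2.2.trans (by gcongr; exact ht.2)
    simpa [hrow u hu] using norm_sub_sub_smul_fderiv_le hU hf hv
      (fun t ht => by simpa using hmem u t hu ht.1) hsecond

theorem boundary_laplace_transform_limit_general (h : ℝ × ℝ → ℝ) (C c : ℝ) (hc : 0 < c)
    (hsmooth : ∃ U : Set (ℝ × ℝ), IsOpen U ∧ (Set.Ici (0 : ℝ) ×ˢ Set.Ici (0 : ℝ)) ⊆ U ∧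
      ContDiffOn ℝ 2 h U)
    (hbound : ∀ u v : ℝ, 0 ≤ u → 0 ≤ v →
      |h (u, v)| ≤ C * Real.exp (c * (u + v)) ∧
      ‖iteratedFDeriv ℝ 1 h (u, v)‖ ≤ C * Real.exp (c * (u + v)) ∧
      ‖iteratedFDeriv ℝ 2 h (u, v)‖ ≤ C * Real.exp (c * (u + v)))
    (hrow : ∀ u : ℝ, 0 ≤ u → h (u, 0) = 0)
    (hcol : ∀ v : ℝ, 0 ≤ v → h (0, v) = 0) :
    (∀ x : ℝ, c < x →
      Tendsto (fun y : ℝ => y ^ 2 *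
          ∫ u in Set.Ioi (0 : ℝ), ∫ v in Set.Ioi (0 : ℝ),
            Real.exp (-(u * x + v * y)) * h (u, v))
        atTop
        (nhds (∫ u in Set.Ioi (0 : ℝ),
          Real.exp (-(u * x)) * fderiv ℝ h (u, 0) ((0 : ℝ), (1 : ℝ))))) ∧
    (∀ y : ℝ, c < y →
      Tendsto (fun x : ℝ => x ^ 2 *
          ∫ u in Set.Ioi (0 : ℝ), ∫ v in Set.Ioi (0 : ℝ),
            Real.exp (-(u * x + v * y)) * h (u, v))
        atTop
        (nhds (∫ v in Set.Ioi (0 : ℝ),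
          Real.exp (-(v * y)) * fderiv ℝ h (0, v) ((1 : ℝ), (0 : ℝ))))) := by
  refine ⟨fun x hx => tendsto_sq_mul_quadrantLaplace hc.le hx hsmooth hbound hrow, fun y hy => ?_⟩
  obtain ⟨U, hU, hQ, hf⟩ := hsmooth
  have hswap := tendsto_sq_mul_quadrantLaplace (h := h ∘ Prod.swap) (C := C) hc.le hy
    ⟨Prod.swap ⁻¹' U, hU.preimage continuous_swap, fun p hp => hQ ⟨hp.2, hp.1⟩,
      hf.comp (contDiff_snd.prodMk contDiff_fst).contDiffOn fun p hp => hp⟩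
    (fun u v hu hv => by
      simpa only [norm_iteratedFDeriv_comp_swap, Function.comp_apply, Prod.swap_prod_mk,
        add_comm u v] using hbound v u hv hu)
    hcol
  simp only [fderiv_comp_swap_apply, Prod.swap_prod_mk] at hswap
  refine hswap.congr' ?_
  filter_upwards [eventually_gt_atTop c] with x hx
  rw [quadrantLaplace_comp_swap (integrable_exp_neg_mul_quadrant_of_abs_le hx hy
    (hf.continuousOn.mono hQ) fun u v hu hv => (hbound u v hu hv).1)]
  rfl

/-- For a function `h` of exponential order (together with its first two derivatives) on
the quarter plane, twice continuously differentiable on a neighborhood of `[0,∞)²` and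
vanishing on the boundary, the boundary Laplace transforms are recovered from the
two-dimensional Laplace transform `ℒ(h)(x,y) = ∫₀^∞∫₀^∞ e^{−ux−vy} h(u,v) du dv` via
`ℒ₂(h)(x) = lim_{y→∞} y²·ℒ(h)(x,y)` for `x > c`, and symmetrically
`ℒ₁(h)(y) = lim_{x→∞} x²·ℒ(h)(x,y)` for `y > c`. -/
theorem boundary_laplace_transform_limit (h : ℝ × ℝ → ℝ) (C c : ℝ) (hC : 0 < C) (hc : 0 < c)
    (hsmooth : ∃ U : Set (ℝ × ℝ), IsOpen U ∧ (Set.Ici (0 : ℝ) ×ˢ Set.Ici (0 : ℝ)) ⊆ U ∧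
      ContDiffOn ℝ 2 h U)
    (hbound : ∀ u v : ℝ, 0 ≤ u → 0 ≤ v →
      |h (u, v)| ≤ C * Real.exp (c * (u + v)) ∧
      ‖iteratedFDeriv ℝ 1 h (u, v)‖ ≤ C * Real.exp (c * (u + v)) ∧
      ‖iteratedFDeriv ℝ 2 h (u, v)‖ ≤ C * Real.exp (c * (u + v)))
    (hrow : ∀ u : ℝ, 0 ≤ u → h (u, 0) = 0)
    (hcol : ∀ v : ℝ, 0 ≤ v → h (0, v) = 0) :
    (∀ x : ℝ, c < x →
      Tendsto (fun y : ℝ => y ^ 2 *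
          ∫ u in Set.Ioi (0 : ℝ), ∫ v in Set.Ioi (0 : ℝ),
            Real.exp (-(u * x + v * y)) * h (u, v))
        atTop
        (nhds (∫ u in Set.Ioi (0 : ℝ),
          Real.exp (-(u * x)) * fderiv ℝ h (u, 0) ((0 : ℝ), (1 : ℝ))))) ∧
    (∀ y : ℝ, c < y →
      Tendsto (fun x : ℝ => x ^ 2 *
          ∫ u in Set.Ioi (0 : ℝ), ∫ v in Set.Ioi (0 : ℝ),
            Real.exp (-(u * x + v * y)) * h (u, v))
        atTop
        (nhds (∫ v in Set.Ioi (0 : ℝ),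
          Real.exp (-(v * y)) * fderiv ℝ h (0, v) ((1 : ℝ), (0 : ℝ))))) :=
  boundary_laplace_transform_limit_general h C c hc hsmooth hbound hrow hcol
end

section
/- Let (p_{i,j}) be a non-degenerate model with small steps and zero drift, and write its kernel as K(x,y) = ã(y)x² + b̃(y)x + c̃(y), where ã(y) = p_{−1,1} + p_{−1,0}y + p_{−1,−1}y², b̃(y) = p_{0,1} − y + p_{0,−1}y², and c̃(y) = p_{1,1} + p_{1,0}y + p_{1,−1}y². Then the three polynomials ã, b̃, c̃ ∈ ℝ[y] have no common complex zero. -/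
open Finset

/-- For a non-degenerate model with small steps and zero drift, the coefficients
`ã(y) = p_{−1,1} + p_{−1,0}y + p_{−1,−1}y²`, `b̃(y) = p_{0,1} − y + p_{0,−1}y²` and
`c̃(y) = p_{1,1} + p_{1,0}y + p_{1,−1}y²` of the kernel `K(x,y) = ã(y)x² + b̃(y)x + c̃(y)`
(as a quadratic polynomial in `x`) have no common complex zero. -/
theorem kernel_coefficients_no_common_zero (M : SmallStepModel)
    (hnd : M.NonDegenerate) (hzd : M.ZeroDrift) :
    ¬∃ y : ℂ,
      (M.p (-1) 1 : ℂ) + (M.p (-1) 0 : ℂ) * y + (M.p (-1) (-1) : ℂ) * y ^ 2 = 0 ∧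
      (M.p 0 1 : ℂ) - y + (M.p 0 (-1) : ℂ) * y ^ 2 = 0 ∧
      (M.p 1 1 : ℂ) + (M.p 1 0 : ℂ) * y + (M.p 1 (-1) : ℂ) * y ^ 2 = 0 := by
  rintro ⟨y, ha, hb, hc⟩
  -- vertical zero drift: the top and bottom row sums are equal
  have hvd : M.p (-1) 1 + M.p 0 1 + M.p 1 1
      = M.p (-1) (-1) + M.p 0 (-1) + M.p 1 (-1) := by
    have h := hzd.2
    simp [SmallStepGrid, Finset.sum_product] at h
    linarith
  have hsum : M.p (-1) 0 + M.p 1 0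
      = 1 - (M.p (-1) 1 + M.p 0 1 + M.p 1 1)
        - (M.p (-1) (-1) + M.p 0 (-1) + M.p 1 (-1)) := by
    have h00 : M.p 0 0 = 0 := by
      by_contra h
      exact (M.supp 0 0 h).2 rfl
    have h := M.sum_one
    simp [SmallStepGrid, Finset.sum_product] at h
    linarith
  set α : ℝ := M.p (-1) 1 + M.p 0 1 + M.p 1 1 with hα
  -- adding the three kernel coefficient equations yields α (y - 1)² = 0
  have hkey : (α : ℂ) * (y - 1) ^ 2 = 0 := by
    have hv : (M.p (-1) (-1) : ℂ) + M.p 0 (-1) + M.p 1 (-1) = (α : ℂ) := by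
      exact_mod_cast congrArg Complex.ofReal hvd.symm
    have hs' : M.p (-1) 0 + M.p 1 0 = 1 - 2 * α := by
      rw [hsum, ← hvd]; ring
    have hs : (M.p (-1) 0 : ℂ) + M.p 1 0 = 1 - 2 * (α : ℂ) := by
      exact_mod_cast congrArg Complex.ofReal hs'
    have hαc : (α : ℂ) = (M.p (-1) 1 : ℂ) + M.p 0 1 + M.p 1 1 := by
      exact_mod_cast congrArg Complex.ofReal hα
    linear_combination ha + hb + hc - y ^ 2 * hv - y * hs + hαc
  rcases mul_eq_zero.1 hkey with hα0 | hy1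
  · -- α = 0 : top row vanishes, contradicting non-degeneracy at k = 6
    have hα0' : α = 0 := by exact_mod_cast hα0
    have h1 : M.p (-1) 1 = 0 := by
      nlinarith [M.nonneg (-1) 1, M.nonneg 0 1, M.nonneg 1 1]
    have h2 : M.p 0 1 = 0 := by
      nlinarith [M.nonneg (-1) 1, M.nonneg 0 1, M.nonneg 1 1]
    have h3 : M.p 1 1 = 0 := by
      nlinarith [M.nonneg (-1) 1, M.nonneg 0 1, M.nonneg 1 1]
    exact hnd 6 ⟨by simpa [SmallStepModel.cyc] using h1,
      by simpa [SmallStepModel.cyc, show (6 : Fin 8) + 1 = 7 by decide] using h2,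
      by simpa [SmallStepModel.cyc, show (6 : Fin 8) + 2 = 0 by decide] using h3⟩
  · -- y = 1 : left column vanishes, contradicting non-degeneracy at k = 4
    have hy : y = 1 := sub_eq_zero.1 (pow_eq_zero_iff two_ne_zero |>.1 hy1)
    subst hy
    have ha' : M.p (-1) 1 + M.p (-1) 0 + M.p (-1) (-1) = 0 := by
      have : ((M.p (-1) 1 + M.p (-1) 0 + M.p (-1) (-1) : ℝ) : ℂ) = 0 := by
        push_cast
        linear_combination ha
      exact_mod_cast this
    have h1 : M.p (-1) (-1) = 0 := by
      nlinarith [M.nonneg (-1) 1, M.nonneg (-1) 0, M.nonneg (-1) (-1)]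
    have h2 : M.p (-1) 0 = 0 := by
      nlinarith [M.nonneg (-1) 1, M.nonneg (-1) 0, M.nonneg (-1) (-1)]
    have h3 : M.p (-1) 1 = 0 := by
      nlinarith [M.nonneg (-1) 1, M.nonneg (-1) 0, M.nonneg (-1) (-1)]
    exact hnd 4 ⟨by simpa [SmallStepModel.cyc] using h1,
      by simpa [SmallStepModel.cyc, show (4 : Fin 8) + 1 = 5 by decide] using h2,
      by simpa [SmallStepModel.cyc, show (4 : Fin 8) + 2 = 6 by decide] using h3⟩
end

section
/- Let (p_{i,j}) be a non-degenerate model with small steps and zero drift that has an East–West symmetry, i.e. p_{1,j} = p_{−1,j} for all j ∈ {−1,0,1}, and let K(x,y) = Σ_{(i,j)} p_{i,j} x^{1−i} y^{1−j} − xy be its kernel. Then for every y ∈ ℂ and all x₁, x₂ ∈ ℂ \ {1} with K(x₁,y) = 0 and K(x₂,y) = 0, one has x₁/(1−x₁)² = x₂/(1−x₂)². -/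
open Finset

/-- The kernel `K(x,y) = Σ_{(i,j)} p_{i,j} x^{1−i} y^{1−j} − xy` of the model, as a
function on `ℂ × ℂ`. -/
noncomputable def kernelFun (M : SmallStepModel) (x y : ℂ) : ℂ :=
  (∑ uv ∈ SmallStepGrid, (M.p uv.1 uv.2 : ℂ) *
      x ^ (1 - uv.1).toNat * y ^ (1 - uv.2).toNat) - x * y

lemma aux_no_common_root (α β γ δ ε : ℝ) (hα : 0 ≤ α) (hβ : 0 ≤ β) (hγ : 0 ≤ γ)
    (hδ : 0 ≤ δ) (hε : 0 ≤ ε)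
    (h1 : ¬(γ = 0 ∧ β = 0 ∧ α = 0)) (h2 : ¬(α = 0 ∧ δ = 0)) (y : ℂ)
    (hA : (α : ℂ) + β * y + γ * y ^ 2 = 0)
    (hB : (δ : ℂ) - y + ε * y ^ 2 = 0) : False := by
  obtain ⟨c, d⟩ := y
  rw [Complex.ext_iff] at hA hB
  simp [pow_two, Complex.mul_re, Complex.mul_im, Complex.ext_iff] at hA hB
  obtain ⟨hA1, hA2⟩ := hA
  obtain ⟨hB1, hB2⟩ := hB
  by_cases hdz : d = 0
  · subst hdz
    simp at hA1 hA2 hB1 hB2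
    have hc0 : 0 ≤ c := by nlinarith
    rcases eq_or_lt_of_le hc0 with h | h
    · apply h2
      constructor <;> nlinarith
    · apply h1
      have hγ0 : γ = 0 := by
        nlinarith [mul_nonneg hβ h.le, mul_nonneg (mul_nonneg hγ h.le) h.le, mul_pos h h]
      have hβ0 : β = 0 := by nlinarith [mul_nonneg hβ h.le]
      exact ⟨hγ0, hβ0, by nlinarith⟩
  · have key : 2 * ε * c - 1 = 0 := by
      rcases mul_eq_zero.mp (show d * (2 * ε * c - 1) = 0 by linear_combination hB2) with h | h
      · exact absurd h hdz
      · exact h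
    have key2 : β + 2 * γ * c = 0 := by
      rcases mul_eq_zero.mp (show d * (β + 2 * γ * c) = 0 by linear_combination hA2) with h | h
      · exact absurd h hdz
      · exact h
    have hcpos : 0 < c := by nlinarith
    have hβ0 : β = 0 := by nlinarith [mul_nonneg hγ hcpos.le]
    have hγ0 : γ = 0 := by nlinarith
    exact h1 ⟨hγ0, hβ0, by nlinarith⟩

lemma kernelFun_eq (M : SmallStepModel)
    (hEW : ∀ j ∈ ({-1, 0, 1} : Finset ℤ), M.p 1 j = M.p (-1) j) (x y : ℂ) :
    kernelFun M x y =
      ((M.p (-1) 1 : ℂ) + (M.p (-1) 0 : ℂ) * y + (M.p (-1) (-1) : ℂ) * y ^ 2) * x ^ 2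
      + ((M.p 0 1 : ℂ) - y + (M.p 0 (-1) : ℂ) * y ^ 2) * x
      + ((M.p (-1) 1 : ℂ) + (M.p (-1) 0 : ℂ) * y + (M.p (-1) (-1) : ℂ) * y ^ 2) := by
  have hp00 : M.p 0 0 = 0 := by
    by_contra h
    exact (M.supp 0 0 h).2 rfl
  have e1 := hEW (-1) (by simp)
  have e2 := hEW 0 (by simp)
  have e3 := hEW 1 (by simp)
  simp [kernelFun, SmallStepGrid, Finset.sum_product, hp00, e1, e2, e3]
  ring


/-- For a non-degenerate model with small steps, zero drift and East–West symmetry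
(`p_{1,j} = p_{−1,j}` for all `j`), the function `w(x) = x/(1−x)²` takes the same value
on any two roots (≠ 1) of `K(·,y) = 0`: this is the invariance property of the conformal
gluing function `ω(x) = c·x/(1−x)²`. -/
theorem omega_invariant_on_kernel_roots (M : SmallStepModel)
    (hnd : M.NonDegenerate) (hzd : M.ZeroDrift)
    (hEW : ∀ j ∈ ({-1, 0, 1} : Finset ℤ), M.p 1 j = M.p (-1) j) :
    ∀ y x₁ x₂ : ℂ, x₁ ≠ 1 → x₂ ≠ 1 →
      kernelFun M x₁ y = 0 → kernelFun M x₂ y = 0 →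
      x₁ / (1 - x₁) ^ 2 = x₂ / (1 - x₂) ^ 2 := by
  intro y x₁ x₂ hx₁ hx₂ hk₁ hk₂
  set A : ℂ := (M.p (-1) 1 : ℂ) + (M.p (-1) 0 : ℂ) * y + (M.p (-1) (-1) : ℂ) * y ^ 2 with hAdef
  set B : ℂ := (M.p 0 1 : ℂ) - y + (M.p 0 (-1) : ℂ) * y ^ 2 with hBdef
  rw [kernelFun_eq M hEW] at hk₁ hk₂
  rw [← hAdef, ← hBdef] at hk₁ hk₂
  rcases eq_or_ne x₁ x₂ with heq | hne
  · rw [heq]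
  · by_cases hA : A = 0
    · by_cases hB : B = 0
      · exfalso
        refine aux_no_common_root (M.p (-1) 1) (M.p (-1) 0) (M.p (-1) (-1))
          (M.p 0 1) (M.p 0 (-1)) (M.nonneg _ _) (M.nonneg _ _) (M.nonneg _ _)
          (M.nonneg _ _) (M.nonneg _ _) ?_ ?_ y ?_ ?_
        · exact hnd 4
        · intro ⟨ha, hb⟩
          exact hnd 6 ⟨ha, hb, (hEW 1 (by simp)).trans ha⟩
        · exact hA
        · exact hB
      · exfalso
        have h1 : B * x₁ = 0 := by rw [hA] at hk₁; linear_combination hk₁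
        have h2 : B * x₂ = 0 := by rw [hA] at hk₂; linear_combination hk₂
        have e1 : x₁ = 0 := by
          rcases mul_eq_zero.mp h1 with h | h
          · exact absurd h hB
          · exact h
        have e2 : x₂ = 0 := by
          rcases mul_eq_zero.mp h2 with h | h
          · exact absurd h hB
          · exact h
        exact hne (e1.trans e2.symm)
    · have hsum : A * (x₁ + x₂) + B = 0 := by
        rcases mul_eq_zero.mp (show (x₁ - x₂) * (A * (x₁ + x₂) + B) = 0 by
          linear_combination hk₁ - hk₂) with h | h
        · exact absurd (sub_eq_zero.mp h) hne
        · exact h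
      have hprod : x₁ * x₂ = 1 := by
        have h : A * (1 - x₁ * x₂) = 0 := by linear_combination hk₁ - x₁ * hsum
        rcases mul_eq_zero.mp h with h' | h'
        · exact absurd h' hA
        · linear_combination -h'
      have d1 : (1 - x₁) ^ 2 ≠ 0 := pow_ne_zero _ (sub_ne_zero.mpr (Ne.symm hx₁))
      have d2 : (1 - x₂) ^ 2 ≠ 0 := pow_ne_zero _ (sub_ne_zero.mpr (Ne.symm hx₂))
      rw [div_eq_div_iff d1 d2]
      linear_combination (x₂ - x₁) * hprod
end
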